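/- arXiv:1106.1401 — 10 statements merged into one kernel-verified Lean document; each statement's English description precedes it below -/
import Mathlib

section
/- Let X ⊆ ℝ be an interval, f ∈ C¹(X), g ∈ C¹(X) monotone, with |f'(x)| ≤ |g'(x)| for all x ∈ X, and suppose the set {x ∈ X : |f'(x)| = |g'(x)|} has Lebesgue measure zero. Then |f(x) − f(y)| < |g(x) − g(y)| for all x ≠ y in X. -/
/-!
Assume `g` is monotone, so `|f'| ≤ g'` on the interior of `X`. Then `g - f` and `g + f` are
monotone, which gives `|f y - f x| ≤ g y - g x` for `x < y`. If equality held, one of `g ∓ f`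
would be constant on `[x, y]`, forcing `|f'| = g'` on all of `(x, y)`, a set of positive measure.
-/

open Set MeasureTheory Filter Topology

section StrictMeanValue

variable {f g h : ℝ → ℝ} {a b : ℝ}

theorem lt_of_deriv_nonneg_of_exists_deriv_pos (hc : ContinuousOn h (Icc a b))
    (hd : DifferentiableOn ℝ h (Ioo a b)) (hnonneg : ∀ t ∈ Ioo a b, 0 ≤ deriv h t)
    (hpos : ∃ t ∈ Ioo a b, 0 < deriv h t) : h a < h b := by
  obtain ⟨t, ht, hpos⟩ := hpos
  have hab : a ≤ b := (ht.1.trans ht.2).le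
  have hmono : MonotoneOn h (Icc a b) :=
    monotoneOn_of_deriv_nonneg (convex_Icc a b) hc (by rwa [interior_Icc])
      (by rwa [interior_Icc])
  refine (hmono ⟨le_rfl, hab⟩ ⟨hab, le_rfl⟩ hab).lt_of_ne fun heq => hpos.ne' ?_
  have hconst : h =ᶠ[𝓝 t] fun _ => h a := by
    filter_upwards [Icc_mem_nhds ht.1 ht.2] with s hs
    exact le_antisymm (heq ▸ hmono hs ⟨hab, le_rfl⟩ hs.2) (hmono ⟨le_rfl, hab⟩ hs hs.1)
  rw [hconst.deriv_eq, deriv_const]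

theorem abs_sub_lt_sub_of_abs_deriv_le (hfc : ContinuousOn f (Icc a b))
    (hgc : ContinuousOn g (Icc a b)) (hfd : DifferentiableOn ℝ f (Ioo a b))
    (hgd : DifferentiableOn ℝ g (Ioo a b)) (hle : ∀ t ∈ Ioo a b, |deriv f t| ≤ deriv g t)
    (hlt : ∃ t ∈ Ioo a b, |deriv f t| < deriv g t) :
    |f b - f a| < g b - g a := by
  have hdiff : ∀ t ∈ Ioo a b, DifferentiableAt ℝ f t ∧ DifferentiableAt ℝ g t := fun t ht =>
    ⟨hfd.differentiableAt (Ioo_mem_nhds ht.1 ht.2), hgd.differentiableAt (Ioo_mem_nhds ht.1 ht.2)⟩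
  have hderiv_sub : ∀ t ∈ Ioo a b, deriv (g - f) t = deriv g t - deriv f t := fun t ht =>
    deriv_sub (hdiff t ht).2 (hdiff t ht).1
  have hderiv_add : ∀ t ∈ Ioo a b, deriv (g + f) t = deriv g t + deriv f t := fun t ht =>
    deriv_add (hdiff t ht).2 (hdiff t ht).1
  obtain ⟨t, ht, hlt⟩ := hlt
  have hsub := lt_of_deriv_nonneg_of_exists_deriv_pos (hgc.sub hfc) (hgd.sub hfd)
    (fun s hs => by rw [hderiv_sub s hs]; linarith [le_abs_self (deriv f s), hle s hs])
    ⟨t, ht, by rw [hderiv_sub t ht]; linarith [le_abs_self (deriv f t)]⟩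
  have hadd := lt_of_deriv_nonneg_of_exists_deriv_pos (hgc.add hfc) (hgd.add hfd)
    (fun s hs => by rw [hderiv_add s hs]; linarith [neg_abs_le (deriv f s), hle s hs])
    ⟨t, ht, by rw [hderiv_add t ht]; linarith [neg_abs_le (deriv f t)]⟩
  simp only [Pi.sub_apply, Pi.add_apply] at hsub hadd
  rw [abs_sub_lt_iff]
  constructor <;> linarith

end StrictMeanValue

section Interval

variable {X : Set ℝ} {f g : ℝ → ℝ}

theorem abs_sub_lt_sub_of_monotoneOn (hX : X.OrdConnected) (hf : DifferentiableOn ℝ f X)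
    (hg : DifferentiableOn ℝ g X) (hgmono : MonotoneOn g X)
    (hbound : ∀ x ∈ X, |deriv f x| ≤ |deriv g x|)
    (hnull : volume {x ∈ X | |deriv f x| = |deriv g x|} = 0)
    {x y : ℝ} (hx : x ∈ X) (hy : y ∈ X) (hxy : x < y) :
    |f y - f x| < g y - g x := by
  have hIcc : Icc x y ⊆ X := hX.out hx hy
  have hIoo : Ioo x y ⊆ X := Ioo_subset_Icc_self.trans hIcc
  have habs_deriv_g : ∀ t ∈ Ioo x y, |deriv g t| = deriv g t := fun t ht => by
    have hX_nhds : X ∈ 𝓝 t := mem_of_superset (Ioo_mem_nhds ht.1 ht.2) hIoo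
    rw [← derivWithin_of_mem_nhds hX_nhds]
    exact abs_of_nonneg hgmono.derivWithin_nonneg
  have hstrict : ∃ t ∈ Ioo x y, |deriv f t| < deriv g t := by
    by_contra! hnot
    have hsub : Ioo x y ⊆ {t ∈ X | |deriv f t| = |deriv g t|} := fun t ht =>
      ⟨hIoo ht, by
        have hle := hbound t (hIoo ht)
        rw [habs_deriv_g t ht] at hle ⊢
        exact hle.antisymm (hnot t ht)⟩
    have hvol := measure_mono_null hsub hnull
    rw [Real.volume_Ioo, ENNReal.ofReal_eq_zero] at hvol
    linarith
  exact abs_sub_lt_sub_of_abs_deriv_le (hf.continuousOn.mono hIcc) (hg.continuousOn.mono hIcc)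
    (hf.mono hIoo) (hg.mono hIoo)
    (fun t ht => habs_deriv_g t ht ▸ hbound t (hIoo ht)) hstrict

theorem abs_sub_lt_abs_sub_of_monotoneOn_or_antitoneOn (hX : X.OrdConnected)
    (hf : DifferentiableOn ℝ f X) (hg : DifferentiableOn ℝ g X)
    (hgmono : MonotoneOn g X ∨ AntitoneOn g X)
    (hbound : ∀ x ∈ X, |deriv f x| ≤ |deriv g x|)
    (hnull : volume {x ∈ X | |deriv f x| = |deriv g x|} = 0)
    {x y : ℝ} (hx : x ∈ X) (hy : y ∈ X) (hxy : x < y) :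
    |f y - f x| < |g y - g x| := by
  rcases hgmono with hmono | hanti
  · exact (abs_sub_lt_sub_of_monotoneOn hX hf hg hmono hbound hnull hx hy hxy).trans_le
      (le_abs_self _)
  · have hneg := abs_sub_lt_sub_of_monotoneOn hX hf hg.neg hanti.neg
      (by simpa only [deriv.neg', abs_neg] using hbound)
      (by simpa only [deriv.neg', abs_neg] using hnull) hx hy hxy
    refine hneg.trans_le ?_
    rw [Pi.neg_apply, Pi.neg_apply, neg_sub_neg, abs_sub_comm]
    exact le_abs_self _

end Interval

/-- strict mean-value comparison: if `|f'| ≤ |g'|` on an interval `X`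
with `g` monotone, and equality holds only on a Lebesgue-null set, then
`|f x − f y| < |g x − g y|` for all `x ≠ y` in `X`. -/
theorem stmt_1 (X : Set ℝ) (hX : X.OrdConnected) (f g : ℝ → ℝ)
    (hf : ContDiffOn ℝ 1 f X) (hg : ContDiffOn ℝ 1 g X)
    (hgmono : MonotoneOn g X ∨ AntitoneOn g X)
    (hbound : ∀ x ∈ X, |deriv f x| ≤ |deriv g x|)
    (hnull : volume {x ∈ X | |deriv f x| = |deriv g x|} = 0) :
    ∀ x ∈ X, ∀ y ∈ X, x ≠ y → |f x - f y| < |g x - g y| := by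
  intro x hx y hy hne
  wlog hxy : x < y generalizing x y
  · rw [abs_sub_comm (f x), abs_sub_comm (g x)]
    exact this y hy x hx hne.symm (hne.lt_or_gt.resolve_left hxy)
  rw [abs_sub_comm (f x), abs_sub_comm (g x)]
  exact abs_sub_lt_abs_sub_of_monotoneOn_or_antitoneOn hX (hf.differentiableOn one_ne_zero)
    (hg.differentiableOn one_ne_zero) hgmono hbound hnull hx hy hxy
end

section
/- Consider the discrete-time system x(t+1) = ψ(x(t)) on ℝ₊, where ψ is induced by continuously differentiable functions f, g : ℝ₊ → ℝ₊ via g(ψ(x)) = f(x). If (i) |f'(x)| ≤ |g'(x)| for all x with equality only on a Lebesgue-null set, and (ii) g' ≥ 0 everywhere with lim_{x→∞}(f(x) − g(x)) < 0, then every trajectory is bounded and the Lyapunov function V(x) = |f(x) − g(x)| is strictly decreasing along nonequilibrium trajectories. -/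
open Set MeasureTheory Filter Topology

/-!
Since `|f'| ≤ g'` with equality only on a null set, both `g - f` and `g + f` are strictly
increasing on `ℝ₊`, which amounts to `|f b - f a| < |g b - g a|` for `a ≠ b`. Along a step
`a ↦ b` with `g b = f a` this reads `V b = |f b - f a| < |g b - g a| = V a`.
Boundedness: `g - f` increases strictly to `-L > 0`, so `g - f < -L` on `ℝ₊`; once the trajectory
enters `{|g - f| < -L}` the decrease of `V` keeps `g - f` below a level `< -L`, and otherwise
`g - f ≤ L < -L` along the whole trajectory; either way the trajectory stays where
`g - f` has not yet passed that level.
-/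

theorem strictMonoOn_of_deriv_nonneg_of_measure_zero {D : Set ℝ} (hD : Convex ℝ D) {u : ℝ → ℝ}
    (hu : ContinuousOn u D) (hu' : DifferentiableOn ℝ u (interior D))
    (hu'_nonneg : ∀ x ∈ interior D, 0 ≤ deriv u x)
    (hnull : volume {x ∈ interior D | deriv u x = 0} = 0) :
    StrictMonoOn u D := by
  have hmono := monotoneOn_of_deriv_nonneg hD hu hu' hu'_nonneg
  intro a ha b hb hab
  refine (hmono ha hb hab.le).lt_of_ne fun heq => ?_
  have hsubD : Ioo a b ⊆ D := Ioo_subset_Icc_self.trans (hD.ordConnected.out ha hb)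
  have hconst : ∀ z ∈ Ioo a b, u z = u a := fun z hz =>
    le_antisymm (heq ▸ hmono (hsubD hz) hb hz.2.le) (hmono ha (hsubD hz) hz.1.le)
  have hzero : Ioo a b ⊆ {x ∈ interior D | deriv u x = 0} := by
    intro y hy
    refine ⟨?_, ?_⟩
    · rw [← interior_Icc] at hy
      exact interior_mono (hD.ordConnected.out ha hb) hy
    · rw [(eventuallyEq_of_mem (isOpen_Ioo.mem_nhds hy) hconst).deriv_eq]
      exact deriv_const y (u a)
  have hvol := measure_mono_null hzero hnull
  rw [Real.volume_Ioo, ENNReal.ofReal_eq_zero] at hvol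
  linarith

theorem strictMonoOn_add_of_abs_deriv_le {D : Set ℝ} (hD : Convex ℝ D) {f g : ℝ → ℝ}
    (hf : ContinuousOn f D) (hg : ContinuousOn g D)
    (hf' : DifferentiableOn ℝ f (interior D)) (hg' : DifferentiableOn ℝ g (interior D))
    (hle : ∀ x ∈ interior D, |deriv f x| ≤ deriv g x)
    (hnull : volume {x ∈ interior D | |deriv f x| = deriv g x} = 0) :
    StrictMonoOn (g + f) D := by
  have hderiv : ∀ x ∈ interior D, deriv (g + f) x = deriv g x + deriv f x := fun x hx =>
    deriv_add (hg'.differentiableAt (isOpen_interior.mem_nhds hx))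
      (hf'.differentiableAt (isOpen_interior.mem_nhds hx))
  refine strictMonoOn_of_deriv_nonneg_of_measure_zero hD (hg.add hf) (hg'.add hf') ?_ ?_
  · intro x hx
    rw [hderiv x hx]
    linarith [neg_abs_le (deriv f x), hle x hx]
  · refine measure_mono_null ?_ hnull
    rintro x ⟨hx, hzero⟩
    refine ⟨hx, ?_⟩
    rw [hderiv x hx] at hzero
    rw [show deriv f x = -deriv g x by linarith, abs_neg, abs_of_nonneg]
    linarith [abs_nonneg (deriv f x), hle x hx]

theorem strictMonoOn_sub_of_abs_deriv_le {D : Set ℝ} (hD : Convex ℝ D) {f g : ℝ → ℝ}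
    (hf : ContinuousOn f D) (hg : ContinuousOn g D)
    (hf' : DifferentiableOn ℝ f (interior D)) (hg' : DifferentiableOn ℝ g (interior D))
    (hle : ∀ x ∈ interior D, |deriv f x| ≤ deriv g x)
    (hnull : volume {x ∈ interior D | |deriv f x| = deriv g x} = 0) :
    StrictMonoOn (g - f) D := by
  rw [sub_eq_add_neg]
  refine strictMonoOn_add_of_abs_deriv_le hD hf.neg hg hf'.neg hg' ?_ ?_ <;>
    simpa only [deriv.neg, abs_neg]

theorem abs_sub_lt_abs_sub_of_strictMonoOn {α : Type*} [LinearOrder α] {s : Set α}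
    {f g : α → ℝ} (hsub : StrictMonoOn (g - f) s) (hadd : StrictMonoOn (g + f) s)
    {a b : α} (ha : a ∈ s) (hb : b ∈ s) (hab : a ≠ b) :
    |f b - f a| < |g b - g a| := by
  wlog hlt : a < b generalizing a b
  · rw [abs_sub_comm, abs_sub_comm (g b)]
    exact this hb ha hab.symm (lt_of_le_of_ne (not_lt.1 hlt) hab.symm)
  have h₁ := hsub ha hb hlt
  have h₂ := hadd ha hb hlt
  simp only [Pi.sub_apply, Pi.add_apply] at h₁ h₂
  rw [abs_of_pos (a := g b - g a) (by linarith), abs_lt]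
  constructor <;> linarith

theorem StrictMonoOn.lt_of_tendsto_atTop {h : ℝ → ℝ} {a ℓ : ℝ} (hh : StrictMonoOn h (Ici a))
    (hlim : Tendsto h atTop (𝓝 ℓ)) {y : ℝ} (hy : a ≤ y) : h y < ℓ := by
  have hy' : a ≤ y + 1 := by linarith
  calc h y < h (y + 1) := hh hy hy' (by linarith)
    _ ≤ ℓ := ge_of_tendsto hlim <| by
      filter_upwards [eventually_ge_atTop (y + 1)] with z hz
      exact hh.monotoneOn hy' (hy'.trans hz) hz

theorem exists_lt_eventually_le_of_antitone_abs {y : ℕ → ℝ} {ℓ : ℝ} (hℓ : 0 < ℓ)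
    (hy : ∀ t, y t < ℓ) (hanti : Antitone fun t => |y t|) :
    ∃ c < ℓ, ∀ᶠ t in atTop, y t ≤ c := by
  by_cases hcase : ∃ t₀, -ℓ < y t₀
  · obtain ⟨t₀, ht₀⟩ := hcase
    exact ⟨|y t₀|, abs_lt.2 ⟨ht₀, hy t₀⟩,
      eventually_atTop.2 ⟨t₀, fun t ht => (le_abs_self _).trans (hanti ht)⟩⟩
  · push Not at hcase
    exact ⟨-ℓ, by linarith, Eventually.of_forall hcase⟩

theorem bddAbove_range_of_antitone_abs_comp {h : ℝ → ℝ} {x : ℕ → ℝ} {ℓ : ℝ} (hℓ : 0 < ℓ)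
    (hlim : Tendsto h atTop (𝓝 ℓ)) (hlt : ∀ t, h (x t) < ℓ)
    (hanti : Antitone fun t => |h (x t)|) :
    BddAbove (range x) := by
  obtain ⟨c, hc, hev⟩ := exists_lt_eventually_le_of_antitone_abs hℓ hlt hanti
  obtain ⟨N, hN⟩ := eventually_atTop.1 (hlim.eventually_const_lt hc)
  refine (isBoundedUnder_of_eventually_le (a := N) ?_).bddAbove_range
  filter_upwards [hev] with t ht
  by_contra! hNt
  linarith [hN _ hNt.le]

theorem stmt_2_general (f g : ℝ → ℝ)
    (hf : ContDiffOn ℝ 1 f (Set.Ici (0:ℝ))) (hg : ContDiffOn ℝ 1 g (Set.Ici (0:ℝ)))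
    (hbound : ∀ x ≥ (0:ℝ), |deriv f x| ≤ |deriv g x|)
    (hnull : volume {x : ℝ | 0 ≤ x ∧ |deriv f x| = |deriv g x|} = 0)
    (hgmono : ∀ x ≥ (0:ℝ), 0 ≤ deriv g x)
    (hlim : ∃ L : ℝ, L < 0 ∧ Tendsto (fun x => f x - g x) atTop (𝓝 L))
    (x : ℕ → ℝ) (hxpos : ∀ t, 0 ≤ x t)
    (htraj : ∀ t, g (x (t + 1)) = f (x t)) :
    (∃ M : ℝ, ∀ t, x t ≤ M) ∧
      (∀ t, x (t + 1) ≠ x t →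
        |f (x (t + 1)) - g (x (t + 1))| < |f (x t) - g (x t)|) := by
  obtain ⟨L, hL, hlim⟩ := hlim
  have hf' := (hf.differentiableOn one_ne_zero).mono (interior_subset (s := Ici (0:ℝ)))
  have hg' := (hg.differentiableOn one_ne_zero).mono (interior_subset (s := Ici (0:ℝ)))
  have habs : ∀ y ∈ interior (Ici (0:ℝ)), |deriv g y| = deriv g y := fun y hy =>
    abs_of_nonneg (hgmono y (interior_subset hy))
  have hle : ∀ y ∈ interior (Ici (0:ℝ)), |deriv f y| ≤ deriv g y := fun y hy =>
    habs y hy ▸ hbound y (interior_subset hy)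
  have hnull' : volume {y ∈ interior (Ici (0:ℝ)) | |deriv f y| = deriv g y} = 0 :=
    measure_mono_null (fun y hy => show 0 ≤ y ∧ _ from
      ⟨interior_subset hy.1, hy.2.trans (habs y hy.1).symm⟩) hnull
  have hsub := strictMonoOn_sub_of_abs_deriv_le (convex_Ici 0) hf.continuousOn hg.continuousOn
    hf' hg' hle hnull'
  have hadd := strictMonoOn_add_of_abs_deriv_le (convex_Ici 0) hf.continuousOn hg.continuousOn
    hf' hg' hle hnull'
  have hdecr : ∀ t, x (t + 1) ≠ x t →
      |f (x (t + 1)) - g (x (t + 1))| < |f (x t) - g (x t)| := fun t hne => by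
    have := abs_sub_lt_abs_sub_of_strictMonoOn hsub hadd (hxpos t) (hxpos (t + 1)) hne.symm
    rwa [htraj t] at this ⊢
  refine ⟨?_, hdecr⟩
  have hanti : Antitone fun t => |(g - f) (x t)| := antitone_nat_of_succ_le fun t => by
    simp only [Pi.sub_apply, abs_sub_comm (g _)]
    rcases eq_or_ne (x (t + 1)) (x t) with heq | hne
    · rw [heq]
    · exact (hdecr t hne).le
  have hlim' : Tendsto (g - f) atTop (𝓝 (-L)) := by
    have := hlim.neg
    simp only [neg_sub] at this
    exact this
  obtain ⟨M, hM⟩ := bddAbove_range_of_antitone_abs_comp (neg_pos.2 hL) hlim'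
    (fun t => hsub.lt_of_tendsto_atTop hlim' (hxpos t)) hanti
  exact ⟨M, fun t => hM (mem_range_self t)⟩

/-- for the implicit scalar system `g(x(t+1)) = f(x(t))` on `ℝ₊`,
under the Lyapunov conditions, every trajectory is bounded and
`V(x) = |f x − g x|` strictly decreases along nonequilibrium trajectories. -/
theorem stmt_2 (f g : ℝ → ℝ)
    (hf : ContDiffOn ℝ 1 f (Set.Ici (0:ℝ))) (hg : ContDiffOn ℝ 1 g (Set.Ici (0:ℝ)))
    (hfpos : ∀ x ≥ (0:ℝ), 0 ≤ f x) (hgpos : ∀ x ≥ (0:ℝ), 0 ≤ g x)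
    (hbound : ∀ x ≥ (0:ℝ), |deriv f x| ≤ |deriv g x|)
    (hnull : volume {x : ℝ | 0 ≤ x ∧ |deriv f x| = |deriv g x|} = 0)
    (hgmono : ∀ x ≥ (0:ℝ), 0 ≤ deriv g x)
    (hlim : ∃ L : ℝ, L < 0 ∧ Tendsto (fun x => f x - g x) atTop (𝓝 L))
    (x : ℕ → ℝ) (hxpos : ∀ t, 0 ≤ x t)
    (htraj : ∀ t, g (x (t + 1)) = f (x t)) :
    (∃ M : ℝ, ∀ t, x t ≤ M) ∧
      (∀ t, x (t + 1) ≠ x t →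
        |f (x (t + 1)) - g (x (t + 1))| < |f (x t) - g (x t)|) :=
  stmt_2_general f g hf hg hbound hnull hgmono hlim x hxpos htraj
end

section
/- Under the hypotheses of the preceding stability theorem (|f'| ≤ |g'| with equality on a null set, g nondecreasing, lim_{x→∞}(f(x) − g(x)) < 0), every trajectory of the system g(x(t+1)) = f(x(t)) converges: lim_{t→∞} V(x(t)) = 0 where V(x) = |f(x) − g(x)|, and x(t) converges to a fixed point x* satisfying f(x*) = g(x*). -/
open Set MeasureTheory Filter Topology

/-!
Integrating `|f'| ≤ g'`, strict almost everywhere, gives `|f b - f a| < g b - g a` for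
`0 ≤ a < b`. Hence `V = |f - g|` is a Lyapunov function:
`V (x (t+1)) = |f (x (t+1)) - f (x t)| ≤ |g (x (t+1)) - g (x t)| = V (x t)`, so `V (x t)`
decreases to some `c`. The map `g - f` is strictly increasing with limit `-L > 0`, so `V < -L`
wherever `g > f`. Hence if `c ≥ -L` the trajectory never enters the region where `g > f`, and
if `c < -L` it eventually avoids the region where `g - f > (c - L) / 2`; either way it is
eventually bounded. A limit pair `(p, q)` of consecutive states satisfies `g q = f p` and
`V p = V q = c`, which contradicts the strict increment inequality unless `c = 0`. Finally all
cluster points are zeros of the injective `g - f`, so they coincide.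
-/

theorem intervalIntegrable_deriv_of_contDiffOn_Icc {E : Type*} [NormedAddCommGroup E]
    [NormedSpace ℝ E] {f : ℝ → E} {a b : ℝ} (hf : ContDiffOn ℝ 1 f (Icc a b)) (hab : a ≤ b) :
    IntervalIntegrable (deriv f) volume a b := by
  rcases hab.eq_or_lt with rfl | hab
  · exact IntervalIntegrable.refl
  have hcont := (hf.continuousOn_derivWithin (uniqueDiffOn_Icc hab) le_rfl)
    |>.intervalIntegrable_of_Icc (μ := volume) hab.le
  refine hcont.congr_uIoo fun y hy => ?_
  rw [uIoo_of_le hab.le] at hy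
  exact derivWithin_of_mem_nhds (Icc_mem_nhds hy.1 hy.2)

theorem abs_sub_lt_sub_of_abs_deriv_le_s3 {f g : ℝ → ℝ} {a b : ℝ} (hab : a < b)
    (hf : ContDiffOn ℝ 1 f (Icc a b)) (hg : ContDiffOn ℝ 1 g (Icc a b))
    (hle : ∀ y ∈ Ioo a b, |deriv f y| ≤ deriv g y)
    (heq : volume {y ∈ Ioo a b | |deriv f y| = deriv g y} = 0) :
    |f b - f a| < g b - g a := by
  have hlt : volume.restrict (Ioo a b) {y | |deriv f y| < deriv g y} ≠ 0 := by
    rw [Measure.restrict_apply' measurableSet_Ioo]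
    intro hzero
    have hcover : Ioo a b ⊆ ({y | |deriv f y| < deriv g y} ∩ Ioo a b) ∪
        {y ∈ Ioo a b | |deriv f y| = deriv g y} := fun y hy =>
      (hle y hy).lt_or_eq.imp (fun h => ⟨h, hy⟩) (fun h => ⟨hy, h⟩)
    have := measure_mono_null hcover (measure_union_null hzero heq)
    rw [Real.volume_Ioo, ENNReal.ofReal_eq_zero] at this
    linarith
  calc |f b - f a| = |∫ y in a..b, deriv f y| := by
        rw [intervalIntegral.integral_deriv_of_contDiffOn_Icc hf hab.le]
    _ ≤ ∫ y in a..b, |deriv f y| := intervalIntegral.abs_integral_le_integral_abs hab.le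
    _ < ∫ y in a..b, deriv g y := by
        refine intervalIntegral.integral_lt_integral_of_ae_le_of_measure_setOfPred_lt_ne_zero
          hab.le (intervalIntegrable_deriv_of_contDiffOn_Icc hf hab.le).abs
          (intervalIntegrable_deriv_of_contDiffOn_Icc hg hab.le) ?_ ?_
        · rw [← restrict_Ioo_eq_restrict_Ioc]
          exact ae_restrict_of_forall_mem measurableSet_Ioo hle
        · rwa [← restrict_Ioo_eq_restrict_Ioc]
    _ = g b - g a := intervalIntegral.integral_deriv_of_contDiffOn_Icc hg hab.le

theorem abs_sub_lt_sub_of_abs_deriv_le_of_Ici {f g : ℝ → ℝ}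
    (hf : ContDiffOn ℝ 1 f (Ici 0)) (hg : ContDiffOn ℝ 1 g (Ici 0))
    (hbound : ∀ x ≥ (0:ℝ), |deriv f x| ≤ |deriv g x|)
    (hnull : volume {x : ℝ | 0 ≤ x ∧ |deriv f x| = |deriv g x|} = 0)
    (hgmono : ∀ x ≥ (0:ℝ), 0 ≤ deriv g x) {a b : ℝ} (ha : 0 ≤ a) (hab : a < b) :
    |f b - f a| < g b - g a := by
  have hIcc : Icc a b ⊆ Ici 0 := fun y hy => ha.trans hy.1
  have habs : ∀ y ∈ Ioo a b, |deriv g y| = deriv g y := fun y hy =>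
    abs_of_nonneg (hgmono y (ha.trans hy.1.le))
  refine abs_sub_lt_sub_of_abs_deriv_le_s3 hab (hf.mono hIcc) (hg.mono hIcc) (fun y hy => ?_)
    (measure_mono_null ?_ hnull)
  · exact habs y hy ▸ hbound y (ha.trans hy.1.le)
  · rintro y ⟨hy, h⟩
    exact ⟨ha.trans hy.1.le, by rw [h, habs y hy]⟩

theorem ContinuousOn.tendsto_comp_of_mem {X Y : Type*} [TopologicalSpace X]
    [TopologicalSpace Y] {F : X → Y} {s : Set X} (hF : ContinuousOn F s) (hs : IsClosed s)
    {y : ℕ → X} {p : X} (hys : ∀ n, y n ∈ s) (hy : Tendsto y atTop (𝓝 p)) :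
    Tendsto (F ∘ y) atTop (𝓝 (F p)) :=
  (hF p (hs.mem_of_tendsto hy (Eventually.of_forall hys))).tendsto.comp
    (tendsto_nhdsWithin_iff.2 ⟨hy, Eventually.of_forall hys⟩)

section Trajectory

variable {f g : ℝ → ℝ} {x : ℕ → ℝ}

theorem abs_sub_lt_abs_sub_of_ne (hfg : ∀ ⦃a b⦄, 0 ≤ a → a < b → |f b - f a| < g b - g a)
    {a b : ℝ} (ha : 0 ≤ a) (hb : 0 ≤ b) (hab : a ≠ b) : |f b - f a| < |g b - g a| := by
  rcases hab.lt_or_gt with h | h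
  · exact (hfg ha h).trans_le (le_abs_self _)
  · rw [abs_sub_comm (f b), abs_sub_comm (g b)]
    exact (hfg hb h).trans_le (le_abs_self _)

theorem strictMonoOn_sub_of_abs_sub_lt (hfg : ∀ ⦃a b⦄, 0 ≤ a → a < b → |f b - f a| < g b - g a) :
    StrictMonoOn (fun y => g y - f y) (Ici 0) := fun a ha b _ hab => by
  dsimp only
  linarith [hfg ha hab, le_abs_self (f b - f a)]

theorem sub_lt_neg_of_tendsto_sub (hfg : ∀ ⦃a b⦄, 0 ≤ a → a < b → |f b - f a| < g b - g a)
    {L : ℝ} (hlim : Tendsto (fun y => f y - g y) atTop (𝓝 L)) {y : ℝ} (hy : 0 ≤ y) :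
    g y - f y < -L := by
  have hmono := strictMonoOn_sub_of_abs_sub_lt hfg
  have hlim' : Tendsto (fun z => g z - f z) atTop (𝓝 (-L)) := by
    simpa only [neg_sub] using hlim.neg
  refine (hmono hy (by simp only [mem_Ici]; linarith) (lt_add_one y)).trans_le
    (ge_of_tendsto hlim' ?_)
  filter_upwards [eventually_ge_atTop (y + 1)] with z hz
  exact hmono.monotoneOn (by simp only [mem_Ici]; linarith)
    (by simp only [mem_Ici]; linarith) hz

theorem lyapunov_succ_le (hfg : ∀ ⦃a b⦄, 0 ≤ a → a < b → |f b - f a| < g b - g a)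
    (hx : ∀ t, 0 ≤ x t) (htraj : ∀ t, g (x (t + 1)) = f (x t)) (t : ℕ) :
    |f (x (t + 1)) - g (x (t + 1))| ≤ |f (x t) - g (x t)| := by
  rcases eq_or_ne (x t) (x (t + 1)) with h | h
  · rw [← h]
  calc |f (x (t + 1)) - g (x (t + 1))| = |f (x (t + 1)) - f (x t)| := by rw [htraj]
    _ ≤ |g (x (t + 1)) - g (x t)| := (abs_sub_lt_abs_sub_of_ne hfg (hx t) (hx (t + 1)) h).le
    _ = |f (x t) - g (x t)| := by rw [htraj, abs_sub_comm]

theorem exists_eventually_le_of_tendsto_lyapunov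
    (hfg : ∀ ⦃a b⦄, 0 ≤ a → a < b → |f b - f a| < g b - g a)
    {L : ℝ} (hL : L < 0) (hlim : Tendsto (fun y => f y - g y) atTop (𝓝 L))
    (hx : ∀ t, 0 ≤ x t) (htraj : ∀ t, g (x (t + 1)) = f (x t)) {c : ℝ}
    (hV : Tendsto (fun t => |f (x t) - g (x t)|) atTop (𝓝 c)) :
    ∃ R, ∀ᶠ t in atTop, x t ≤ R := by
  have hlim' : Tendsto (fun z => g z - f z) atTop (𝓝 (-L)) := by
    simpa only [neg_sub] using hlim.neg
  have hc : ∀ t, c ≤ |f (x t) - g (x t)| :=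
    (antitone_nat_of_succ_le (lyapunov_succ_le hfg hx htraj)).le_of_tendsto hV
  by_cases hcL : c < -L
  · obtain ⟨R, hR⟩ := eventually_atTop.1 <|
      hlim'.eventually (lt_mem_nhds (show (c - L) / 2 < -L by linarith))
    refine ⟨R, (hV.eventually (gt_mem_nhds (show c < (c - L) / 2 by linarith))).mono
      fun t ht => ?_⟩
    by_contra! hRt
    linarith [hR _ hRt.le, neg_abs_le (f (x t) - g (x t))]
  · obtain ⟨R, hR⟩ := eventually_atTop.1 <| hlim'.eventually (lt_mem_nhds (neg_pos.2 hL))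
    refine ⟨R, Eventually.of_forall fun t => ?_⟩
    by_contra! hRt
    have hVt := hc t
    rw [abs_sub_comm, abs_of_pos (hR _ hRt.le)] at hVt
    linarith [sub_lt_neg_of_tendsto_sub hfg hlim (hx t)]

theorem lyapunov_eq_of_tendsto (hfc : ContinuousOn f (Ici 0)) (hgc : ContinuousOn g (Ici 0))
    (hx : ∀ t, 0 ≤ x t) {c : ℝ} (hV : Tendsto (fun t => |f (x t) - g (x t)|) atTop (𝓝 c))
    {ψ : ℕ → ℕ} (hψ : Tendsto ψ atTop atTop) {p : ℝ} (hp : Tendsto (x ∘ ψ) atTop (𝓝 p)) :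
    |f p - g p| = c :=
  tendsto_nhds_unique
    (((hfc.tendsto_comp_of_mem isClosed_Ici (fun _ => hx _) hp).sub
      (hgc.tendsto_comp_of_mem isClosed_Ici (fun _ => hx _) hp)).abs)
    (hV.comp hψ)

theorem lyapunov_limit_eq_zero (hfg : ∀ ⦃a b⦄, 0 ≤ a → a < b → |f b - f a| < g b - g a)
    (hfc : ContinuousOn f (Ici 0)) (hgc : ContinuousOn g (Ici 0))
    (hx : ∀ t, 0 ≤ x t) (htraj : ∀ t, g (x (t + 1)) = f (x t)) {c : ℝ}
    (hV : Tendsto (fun t => |f (x t) - g (x t)|) atTop (𝓝 c)) {R : ℝ}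
    (hR : ∀ᶠ t in atTop, x t ≤ R) : c = 0 := by
  have hpair : ∃ᶠ t in atTop, (x t, x (t + 1)) ∈ Icc 0 R ×ˢ Icc 0 R := by
    refine (hR.and ((tendsto_add_atTop_nat 1).eventually hR)).frequently.mono fun t ht => ?_
    exact ⟨⟨hx t, ht.1⟩, ⟨hx (t + 1), ht.2⟩⟩
  obtain ⟨⟨p, q⟩, -, φ, hφ, hpq⟩ :=
    tendsto_subseq_of_frequently_bounded
      ((Metric.isBounded_Icc 0 R).prod (Metric.isBounded_Icc 0 R)) hpair
  have hp : Tendsto (x ∘ φ) atTop (𝓝 p) := hpq.fst_nhds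
  have hq : Tendsto (x ∘ (· + 1) ∘ φ) atTop (𝓝 q) := hpq.snd_nhds
  have hp0 : 0 ≤ p := ge_of_tendsto' hp fun _ => hx _
  have hq0 : 0 ≤ q := ge_of_tendsto' hq fun _ => hx _
  have hVp := lyapunov_eq_of_tendsto hfc hgc hx hV hφ.tendsto_atTop hp
  have hVq := lyapunov_eq_of_tendsto hfc hgc hx hV
    ((tendsto_add_atTop_nat 1).comp hφ.tendsto_atTop) hq
  have hgq : g q = f p := tendsto_nhds_unique
    (hgc.tendsto_comp_of_mem isClosed_Ici (fun _ => hx _) hq)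
    ((hfc.tendsto_comp_of_mem isClosed_Ici (fun _ => hx _) hp).congr fun j => (htraj _).symm)
  by_contra hc
  have hpq : p ≠ q := by
    rintro rfl
    rw [← hgq, sub_self, abs_zero] at hVp
    exact hc hVp.symm
  have hstep := abs_sub_lt_abs_sub_of_ne hfg hp0 hq0 hpq
  rw [← hgq, hVq, hgq, hVp] at hstep
  exact lt_irrefl c hstep

theorem exists_tendsto_of_lyapunov_tendsto_zero
    (hfg : ∀ ⦃a b⦄, 0 ≤ a → a < b → |f b - f a| < g b - g a)
    (hfc : ContinuousOn f (Ici 0)) (hgc : ContinuousOn g (Ici 0)) (hx : ∀ t, 0 ≤ x t)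
    (hV : Tendsto (fun t => |f (x t) - g (x t)|) atTop (𝓝 0)) {R : ℝ}
    (hR : ∀ᶠ t in atTop, x t ≤ R) :
    ∃ xstar, f xstar = g xstar ∧ Tendsto x atTop (𝓝 xstar) := by
  have hK : ∀ᶠ t in atTop, x t ∈ Icc 0 R := hR.mono fun t ht => ⟨hx t, ht⟩
  have hfix : ∀ p, MapClusterPt p atTop x → 0 ≤ p ∧ f p = g p := fun p hp => by
    obtain ⟨ψ, hψ, hxψ⟩ := hp.tendsto_subseq
    have hVp := lyapunov_eq_of_tendsto hfc hgc hx hV hψ.tendsto_atTop hxψ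
    exact ⟨ge_of_tendsto' hxψ fun _ => hx _, sub_eq_zero.1 (abs_eq_zero.1 hVp)⟩
  obtain ⟨p, -, hp⟩ := isCompact_Icc.exists_mapClusterPt (tendsto_principal.2 hK)
  obtain ⟨hp0, hfp⟩ := hfix p hp
  refine ⟨p, hfp, isCompact_Icc.tendsto_nhds_of_unique_mapClusterPt hK fun y _ hy => ?_⟩
  obtain ⟨hy0, hfy⟩ := hfix y hy
  refine (strictMonoOn_sub_of_abs_sub_lt hfg).injOn hy0 hp0 ?_
  simp only [hfy, hfp, sub_self]

end Trajectory

theorem stmt_3_general (f g : ℝ → ℝ)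
    (hf : ContDiffOn ℝ 1 f (Set.Ici (0:ℝ))) (hg : ContDiffOn ℝ 1 g (Set.Ici (0:ℝ)))
    (hbound : ∀ x ≥ (0:ℝ), |deriv f x| ≤ |deriv g x|)
    (hnull : volume {x : ℝ | 0 ≤ x ∧ |deriv f x| = |deriv g x|} = 0)
    (hgmono : ∀ x ≥ (0:ℝ), 0 ≤ deriv g x)
    (hlim : ∃ L : ℝ, L < 0 ∧ Tendsto (fun x => f x - g x) atTop (𝓝 L))
    (x : ℕ → ℝ) (hxpos : ∀ t, 0 ≤ x t)
    (htraj : ∀ t, g (x (t + 1)) = f (x t)) :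
    Tendsto (fun t => |f (x t) - g (x t)|) atTop (𝓝 0) ∧
      ∃ xstar : ℝ, f xstar = g xstar ∧ Tendsto x atTop (𝓝 xstar) := by
  obtain ⟨L, hL, hlim⟩ := hlim
  have hfg : ∀ ⦃a b⦄, 0 ≤ a → a < b → |f b - f a| < g b - g a := fun _ _ =>
    abs_sub_lt_sub_of_abs_deriv_le_of_Ici hf hg hbound hnull hgmono
  obtain ⟨c, hV⟩ : ∃ c, Tendsto (fun t => |f (x t) - g (x t)|) atTop (𝓝 c) :=
    ⟨_, tendsto_atTop_ciInf (antitone_nat_of_succ_le (lyapunov_succ_le hfg hxpos htraj))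
      ⟨0, by rintro _ ⟨t, rfl⟩; exact abs_nonneg _⟩⟩
  obtain ⟨R, hR⟩ := exists_eventually_le_of_tendsto_lyapunov hfg hL hlim hxpos htraj hV
  obtain rfl := lyapunov_limit_eq_zero hfg hf.continuousOn hg.continuousOn hxpos htraj hV hR
  exact ⟨hV, exists_tendsto_of_lyapunov_tendsto_zero hfg hf.continuousOn hg.continuousOn
    hxpos hV hR⟩

/-- under the stability hypotheses, every trajectory of
`g(x(t+1)) = f(x(t))` converges: `V(x(t)) = |f(x t) − g(x t)| → 0` and
`x(t) → x*` with `f x* = g x*`. -/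
theorem stmt_3 (f g : ℝ → ℝ)
    (hf : ContDiffOn ℝ 1 f (Set.Ici (0:ℝ))) (hg : ContDiffOn ℝ 1 g (Set.Ici (0:ℝ)))
    (hfpos : ∀ x ≥ (0:ℝ), 0 ≤ f x) (hgpos : ∀ x ≥ (0:ℝ), 0 ≤ g x)
    (hbound : ∀ x ≥ (0:ℝ), |deriv f x| ≤ |deriv g x|)
    (hnull : volume {x : ℝ | 0 ≤ x ∧ |deriv f x| = |deriv g x|} = 0)
    (hgmono : ∀ x ≥ (0:ℝ), 0 ≤ deriv g x)
    (hlim : ∃ L : ℝ, L < 0 ∧ Tendsto (fun x => f x - g x) atTop (𝓝 L))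
    (x : ℕ → ℝ) (hxpos : ∀ t, 0 ≤ x t)
    (htraj : ∀ t, g (x (t + 1)) = f (x t)) :
    Tendsto (fun t => |f (x t) - g (x t)|) atTop (𝓝 0) ∧
      ∃ xstar : ℝ, f xstar = g xstar ∧ Tendsto x atTop (𝓝 xstar) :=
  stmt_3_general f g hf hg hbound hnull hgmono hlim x hxpos htraj
end

section
/- If f and g satisfy g(x(t+1)) = f(x(t)) and ρ : ℝ₊ → ℝ is strictly monotone and continuously differentiable with |ρ'(f(x)) f'(x)| ≤ θ |ρ'(g(x)) g'(x)| for all x > 0 and some θ ≤ 1 (plus measure-zero equality set and boundary conditions for ρ∘f, ρ∘g), then the system g(x(t+1)) = f(x(t)) is stable, since ρ∘f and ρ∘g also satisfy the implicit recursion (ρ∘g)(x(t+1)) = (ρ∘f)(x(t)). -/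
open Set MeasureTheory Filter Topology

/-!
Write `ψ = ρ ∘ f` and `φ = ρ ∘ g`, so that the trajectory obeys `φ (x (t+1)) = ψ (x t)`.
Since `|ψ'| ≤ φ'` with equality only on a null set, both `φ - ψ` and `φ + ψ` are strictly
increasing, i.e. `|ψ b - ψ a| < φ b - φ a` for `0 ≤ a < b`.

If `ψ - φ` has a zero `p`, then `|φ (x t) - φ p|` is nonincreasing. Because `ψ < φ` near
infinity, `x` cannot escape to infinity, so some subsequence converges to some `a`; one step of
the recursion preserves the limit of `|φ (x t) - φ p|`, which strict domination allows only for
`a = p`. If `ψ - φ` has no zero, it is negative everywhere by the intermediate value theorem,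
and `x` is decreasing.
-/

theorem MonotoneOn.strictMonoOn_of_volume_deriv_eq_zero {F : ℝ → ℝ} {D : Set ℝ}
    (hD : D.OrdConnected) (hF : MonotoneOn F D)
    (hnull : volume {y ∈ interior D | deriv F y = 0} = 0) : StrictMonoOn F D := by
  intro a ha b hb hab
  refine (hF ha hb hab.le).lt_of_ne fun heq => ?_
  have hIoo : Ioo a b ⊆ D := Ioo_subset_Icc_self.trans (hD.out ha hb)
  have hflat : Ioo a b ⊆ {y ∈ interior D | deriv F y = 0} := by
    intro c hc
    have hconst : F =ᶠ[𝓝 c] fun _ => F a := by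
      filter_upwards [isOpen_Ioo.mem_nhds hc] with y hy
      exact le_antisymm (heq ▸ hF (hIoo hy) hb hy.2.le) (hF ha (hIoo hy) hy.1.le)
    exact ⟨isOpen_Ioo.subset_interior_iff.2 hIoo hc, hconst.deriv_eq.trans (deriv_const c _)⟩
  have := measure_mono_null hflat hnull
  rw [Real.volume_Ioo, ENNReal.ofReal_eq_zero] at this
  linarith

section Domination

variable {φ ψ : ℝ → ℝ}

theorem sub_lt_sub_of_abs_deriv_le_deriv (hφc : ContinuousOn φ (Ici 0))
    (hψc : ContinuousOn ψ (Ici 0)) (hφd : DifferentiableOn ℝ φ (Ioi 0))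
    (hψd : DifferentiableOn ℝ ψ (Ioi 0)) (hle : ∀ y > 0, |deriv ψ y| ≤ deriv φ y)
    (hnull : volume {y : ℝ | 0 ≤ y ∧ |deriv ψ y| = |deriv φ y|} = 0)
    {a b : ℝ} (ha : 0 ≤ a) (hab : a < b) : ψ b - ψ a < φ b - φ a := by
  have hderiv : ∀ y > 0, deriv (φ - ψ) y = deriv φ y - deriv ψ y := fun y hy =>
    deriv_sub (hφd.differentiableAt (Ioi_mem_nhds hy)) (hψd.differentiableAt (Ioi_mem_nhds hy))
  have hmono : MonotoneOn (φ - ψ) (Ici 0) := by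
    refine monotoneOn_of_deriv_nonneg (convex_Ici 0) (hφc.sub hψc) ?_ ?_ <;> rw [interior_Ici]
    · exact hφd.sub hψd
    · intro y hy
      rw [hderiv y hy, sub_nonneg]
      exact (le_abs_self _).trans (hle y hy)
  have hzero : {y ∈ interior (Ici (0 : ℝ)) | deriv (φ - ψ) y = 0} ⊆
      {y : ℝ | 0 ≤ y ∧ |deriv ψ y| = |deriv φ y|} := by
    rintro y ⟨hy, hy0⟩
    rw [interior_Ici] at hy
    rw [hderiv y hy, sub_eq_zero] at hy0
    exact ⟨le_of_lt hy, by rw [hy0]⟩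
  have := (hmono.strictMonoOn_of_volume_deriv_eq_zero ordConnected_Ici
    (measure_mono_null hzero hnull)) ha (ha.trans hab.le) hab
  simp only [Pi.sub_apply] at this
  linarith

theorem abs_sub_lt_sub_of_abs_deriv_le_deriv (hφc : ContinuousOn φ (Ici 0))
    (hψc : ContinuousOn ψ (Ici 0)) (hφd : DifferentiableOn ℝ φ (Ioi 0))
    (hψd : DifferentiableOn ℝ ψ (Ioi 0)) (hle : ∀ y > 0, |deriv ψ y| ≤ deriv φ y)
    (hnull : volume {y : ℝ | 0 ≤ y ∧ |deriv ψ y| = |deriv φ y|} = 0)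
    {a b : ℝ} (ha : 0 ≤ a) (hab : a < b) : |ψ b - ψ a| < φ b - φ a := by
  have hneg : -ψ b - -ψ a < φ b - φ a := by
    refine sub_lt_sub_of_abs_deriv_le_deriv hφc hψc.neg hφd hψd.neg ?_ ?_ ha hab <;>
      simp only [deriv.neg', abs_neg]
    exacts [hle, hnull]
  rw [abs_sub_lt_iff]
  constructor <;> linarith [sub_lt_sub_of_abs_deriv_le_deriv hφc hψc hφd hψd hle hnull ha hab]

end Domination

theorem ContinuousWithinAt.tendsto_comp_of_forall_mem {α β ι : Type*} [TopologicalSpace α]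
    [TopologicalSpace β] {f : α → β} {s : Set α} {a : α} (hf : ContinuousWithinAt f s a)
    {l : Filter ι} {u : ι → α} (hu : Tendsto u l (𝓝 a)) (hs : ∀ i, u i ∈ s) :
    Tendsto (f ∘ u) l (𝓝 (f a)) :=
  hf.tendsto.comp (tendsto_nhdsWithin_iff.2 ⟨hu, Eventually.of_forall hs⟩)

theorem StrictMonoOn.tendsto_of_tendsto_comp {α β ι : Type*} [LinearOrder α]
    [TopologicalSpace α] [OrderTopology α] [LinearOrder β] [TopologicalSpace β] [OrderTopology β]
    {φ : α → β} {c : α} (hφ : StrictMonoOn φ (Ici c)) {l : Filter ι} {u : ι → α}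
    (hu : ∀ i, c ≤ u i) {p : α} (hp : c ≤ p) (hlim : Tendsto (φ ∘ u) l (𝓝 (φ p))) :
    Tendsto u l (𝓝 p) := by
  refine tendsto_order.2 ⟨fun a hap => ?_, fun a hpa => ?_⟩
  · rcases lt_or_ge a c with hac | hca
    · exact Eventually.of_forall fun i => hac.trans_le (hu i)
    · filter_upwards [(tendsto_order.1 hlim).1 _ ((hφ.lt_iff_lt hca hp).2 hap)] with i hi
      exact (hφ.lt_iff_lt hca (hu i)).1 hi
  · have hca : c ≤ a := hp.trans hpa.le
    filter_upwards [(tendsto_order.1 hlim).2 _ ((hφ.lt_iff_lt hp hca).2 hpa)] with i hi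
    exact (hφ.lt_iff_lt (hu i) hca).1 hi

section ImplicitRecursion

variable {φ ψ : ℝ → ℝ} {x : ℕ → ℝ}

theorem strictMonoOn_of_dominated
    (hdom : ∀ a b, 0 ≤ a → a < b → |ψ b - ψ a| < φ b - φ a) : StrictMonoOn φ (Ici 0) :=
  fun a ha b _ hab => sub_pos.1 ((abs_nonneg _).trans_lt (hdom a b ha hab))

theorem abs_sub_lt_abs_sub_of_dominated
    (hdom : ∀ a b, 0 ≤ a → a < b → |ψ b - ψ a| < φ b - φ a)
    {a b : ℝ} (ha : 0 ≤ a) (hb : 0 ≤ b) (hab : a ≠ b) : |ψ a - ψ b| < |φ a - φ b| := by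
  rcases hab.lt_or_gt with h | h
  · rw [abs_sub_comm, abs_sub_comm (φ a)]
    exact (hdom a b ha h).trans_le (le_abs_self _)
  · exact (hdom b a hb h).trans_le (le_abs_self _)

theorem not_tendsto_atTop_of_recursion (hφ : StrictMonoOn φ (Ici 0))
    (hfar : ∀ᶠ y in atTop, ψ y < φ y) (hx : ∀ t, 0 ≤ x t)
    (hrec : ∀ t, φ (x (t + 1)) = ψ (x t)) : ¬ Tendsto x atTop atTop := by
  intro hdiv
  obtain ⟨T, hT⟩ := eventually_atTop.1 (hdiv.eventually hfar)
  have hanti : Antitone fun n => x (n + T) := antitone_nat_of_succ_le fun n => by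
    have := hT (n + T) (Nat.le_add_left T n)
    rw [← hrec, hφ.lt_iff_lt (hx _) (hx _), Nat.add_right_comm] at this
    exact this.le
  obtain ⟨n, hn⟩ :=
    (((tendsto_add_atTop_iff_nat T).2 hdiv).eventually_gt_atTop (x (0 + T))).exists
  exact (hanti (Nat.zero_le n)).not_gt hn

theorem exists_tendsto_subseq_of_not_tendsto_atTop (hx : ∀ t, 0 ≤ x t)
    (hbdd : ¬ Tendsto x atTop atTop) :
    ∃ a, 0 ≤ a ∧ ∃ σ : ℕ → ℕ, StrictMono σ ∧ Tendsto (x ∘ σ) atTop (𝓝 a) := by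
  rw [tendsto_atTop] at hbdd
  push Not at hbdd
  obtain ⟨K, hK⟩ := hbdd
  obtain ⟨a, ha, hσ⟩ := tendsto_subseq_of_frequently_bounded (Metric.isBounded_Icc 0 K)
    (hK.mono fun t ht => ⟨hx t, ht.le⟩)
  rw [closure_Icc] at ha
  exact ⟨a, ha.1, hσ⟩

theorem tendsto_of_recursion_of_fixedPoint
    (hdom : ∀ a b, 0 ≤ a → a < b → |ψ b - ψ a| < φ b - φ a)
    (hφc : ContinuousOn φ (Ici 0)) (hψc : ContinuousOn ψ (Ici 0))
    (hfar : ∀ᶠ y in atTop, ψ y < φ y) (hx : ∀ t, 0 ≤ x t)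
    (hrec : ∀ t, φ (x (t + 1)) = ψ (x t)) {p : ℝ} (hp : 0 ≤ p) (hfix : ψ p = φ p) :
    Tendsto x atTop (𝓝 p) := by
  have hφ := strictMonoOn_of_dominated hdom
  set w : ℕ → ℝ := fun t => |φ (x t) - φ p|
  have hw_succ : ∀ t, w (t + 1) = |ψ (x t) - ψ p| := fun t => by
    simp only [w, hrec, hfix]
  have hw_anti : Antitone w := antitone_nat_of_succ_le fun t => by
    rw [hw_succ]
    rcases eq_or_ne (x t) p with h | h
    · simp [w, h]
    · exact (abs_sub_lt_abs_sub_of_dominated hdom (hx t) hp h).le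
  have hw_lim := tendsto_atTop_ciInf hw_anti ⟨0, by rintro _ ⟨t, rfl⟩; exact abs_nonneg _⟩
  obtain ⟨a, ha, σ, hσ, hxσ⟩ := exists_tendsto_subseq_of_not_tendsto_atTop hx
    (not_tendsto_atTop_of_recursion hφ hfar hx hrec)
  have hwσ : Tendsto (w ∘ σ) atTop (𝓝 |φ a - φ p|) :=
    ((hφc a ha).tendsto_comp_of_forall_mem hxσ fun k => hx _).sub_const _ |>.abs
  have hwσ_succ : Tendsto (fun k => w (σ k + 1)) atTop (𝓝 |ψ a - ψ p|) := by
    simp only [hw_succ]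
    exact ((hψc a ha).tendsto_comp_of_forall_mem hxσ fun k => hx _).sub_const _ |>.abs
  -- Both limits equal `⨅ t, w t`, and strict domination forbids that unless `a = p`.
  have hap : a = p := by
    by_contra hne
    refine (abs_sub_lt_abs_sub_of_dominated hdom ha hp hne).ne ?_
    rw [tendsto_nhds_unique hwσ_succ
        (hw_lim.comp ((tendsto_add_atTop_nat 1).comp hσ.tendsto_atTop)),
      tendsto_nhds_unique hwσ (hw_lim.comp hσ.tendsto_atTop)]
  have hw_zero : Tendsto w atTop (𝓝 0) := by
    rwa [tendsto_nhds_unique (hw_lim.comp hσ.tendsto_atTop) hwσ, hap, sub_self, abs_zero]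
      at hw_lim
  exact hφ.tendsto_of_tendsto_comp hx hp (tendsto_iff_norm_sub_tendsto_zero.2 hw_zero)

theorem tendsto_of_recursion_of_forall_le (hφ : StrictMonoOn φ (Ici 0))
    (hle : ∀ y ≥ 0, ψ y ≤ φ y) (hx : ∀ t, 0 ≤ x t) (hrec : ∀ t, φ (x (t + 1)) = ψ (x t)) :
    Tendsto x atTop (𝓝 (⨅ t, x t)) := by
  refine tendsto_atTop_ciInf (antitone_nat_of_succ_le fun t => ?_) ⟨0, ?_⟩
  · rw [← hφ.le_iff_le (hx _) (hx _), hrec]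
    exact hle _ (hx t)
  · rintro _ ⟨t, rfl⟩
    exact hx t

theorem exists_tendsto_of_recursion
    (hdom : ∀ a b, 0 ≤ a → a < b → |ψ b - ψ a| < φ b - φ a)
    (hφc : ContinuousOn φ (Ici 0)) (hψc : ContinuousOn ψ (Ici 0))
    (hfar : ∀ᶠ y in atTop, ψ y < φ y) (hx : ∀ t, 0 ≤ x t)
    (hrec : ∀ t, φ (x (t + 1)) = ψ (x t)) : ∃ p, Tendsto x atTop (𝓝 p) := by
  by_cases hfix : ∃ p ≥ 0, ψ p = φ p
  · obtain ⟨p, hp, hfix⟩ := hfix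
    exact ⟨p, tendsto_of_recursion_of_fixedPoint hdom hφc hψc hfar hx hrec hp hfix⟩
  refine ⟨_, tendsto_of_recursion_of_forall_le (strictMonoOn_of_dominated hdom)
    (fun y hy => ?_) hx hrec⟩
  by_contra! hy'
  obtain ⟨M, hM⟩ := eventually_atTop.1 hfar
  obtain ⟨p, hp, hp0⟩ := intermediate_value_Icc' (le_max_left y M)
    ((hψc.sub hφc).mono fun z hz => hy.trans hz.1)
    ⟨sub_nonpos.2 (hM _ (le_max_right y M)).le, sub_nonneg.2 hy'.le⟩
  exact hfix ⟨p, hy.trans hp.1, sub_eq_zero.1 hp0⟩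

end ImplicitRecursion

theorem stmt_4_general (f g : ℝ → ℝ) (ρ : ℝ → ℝ) (θ : ℝ)
    (hf : ContDiffOn ℝ 1 f (Set.Ici (0:ℝ))) (hg : ContDiffOn ℝ 1 g (Set.Ici (0:ℝ)))
    (hρ : ContDiff ℝ 1 ρ)
    (hθ : θ ≤ 1)
    (hbound : ∀ x > (0:ℝ), |deriv ρ (f x) * deriv f x| ≤ θ * |deriv ρ (g x) * deriv g x|)
    (hnull : volume {x : ℝ | 0 ≤ x ∧ |deriv (ρ ∘ f) x| = |deriv (ρ ∘ g) x|} = 0)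
    (hgmono : ∀ x ≥ (0:ℝ), 0 ≤ deriv (ρ ∘ g) x)
    (hlim : ∃ L : ℝ, L < 0 ∧ Tendsto (fun x => ρ (f x) - ρ (g x)) atTop (𝓝 L))
    (x : ℕ → ℝ) (hxpos : ∀ t, 0 ≤ x t)
    (htraj : ∀ t, g (x (t + 1)) = f (x t)) :
    (∀ t, ρ (g (x (t + 1))) = ρ (f (x t))) ∧
      ∃ xstar : ℝ, Tendsto x atTop (𝓝 xstar) := by
  have hrec : ∀ t, ρ (g (x (t + 1))) = ρ (f (x t)) := fun t => congrArg ρ (htraj t)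
  have hψ : ContDiffOn ℝ 1 (ρ ∘ f) (Ici 0) := hρ.comp_contDiffOn hf
  have hφ : ContDiffOn ℝ 1 (ρ ∘ g) (Ici 0) := hρ.comp_contDiffOn hg
  have hdiff {F : ℝ → ℝ} (hF : ContDiffOn ℝ 1 F (Ici 0)) : DifferentiableOn ℝ F (Ioi 0) :=
    (hF.differentiableOn one_ne_zero).mono Ioi_subset_Ici_self
  have hchain {F : ℝ → ℝ} (hF : ContDiffOn ℝ 1 F (Ici 0)) {y : ℝ} (hy : 0 < y) :
      deriv (ρ ∘ F) y = deriv ρ (F y) * deriv F y :=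
    deriv_comp y (hρ.differentiable one_ne_zero _)
      ((hdiff hF).differentiableAt (Ioi_mem_nhds hy))
  have hle : ∀ y > 0, |deriv (ρ ∘ f) y| ≤ deriv (ρ ∘ g) y := fun y hy => calc
    |deriv (ρ ∘ f) y| ≤ θ * |deriv (ρ ∘ g) y| := by
        rw [hchain hf hy, hchain hg hy]
        exact hbound y hy
    _ ≤ |deriv (ρ ∘ g) y| := mul_le_of_le_one_left (abs_nonneg _) hθ
    _ = deriv (ρ ∘ g) y := abs_of_nonneg (hgmono y hy.le)
  obtain ⟨L, hL, hLlim⟩ := hlim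
  have hfar : ∀ᶠ y in atTop, (ρ ∘ f) y < (ρ ∘ g) y :=
    (hLlim.eventually (gt_mem_nhds hL)).mono fun y hy => sub_neg.1 hy
  exact ⟨hrec, exists_tendsto_of_recursion
    (fun a b ha hab => abs_sub_lt_sub_of_abs_deriv_le_deriv hφ.continuousOn hψ.continuousOn
      (hdiff hφ) (hdiff hψ) hle hnull ha hab)
    hφ.continuousOn hψ.continuousOn hfar hxpos hrec⟩

/-- scaled stability criterion: if a strictly monotone `C¹` scaling
`ρ` makes the derivative bound `|ρ'(f x) f'(x)| ≤ θ |ρ'(g x) g'(x)|` (θ ≤ 1) hold,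
together with the measure-zero equality set and boundary conditions for
`ρ∘f`, `ρ∘g`, then the system `g(x(t+1)) = f(x(t))` is stable: every trajectory
converges. -/
theorem stmt_4 (f g : ℝ → ℝ) (ρ : ℝ → ℝ) (θ : ℝ)
    (hf : ContDiffOn ℝ 1 f (Set.Ici (0:ℝ))) (hg : ContDiffOn ℝ 1 g (Set.Ici (0:ℝ)))
    (hfpos : ∀ x ≥ (0:ℝ), 0 ≤ f x) (hgpos : ∀ x ≥ (0:ℝ), 0 ≤ g x)
    (hρ : ContDiff ℝ 1 ρ) (hρmono : StrictMono ρ ∨ StrictAnti ρ)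
    (hθ : θ ≤ 1)
    (hbound : ∀ x > (0:ℝ), |deriv ρ (f x) * deriv f x| ≤ θ * |deriv ρ (g x) * deriv g x|)
    (hnull : volume {x : ℝ | 0 ≤ x ∧ |deriv (ρ ∘ f) x| = |deriv (ρ ∘ g) x|} = 0)
    (hgmono : ∀ x ≥ (0:ℝ), 0 ≤ deriv (ρ ∘ g) x)
    (hlim : ∃ L : ℝ, L < 0 ∧ Tendsto (fun x => ρ (f x) - ρ (g x)) atTop (𝓝 L))
    (x : ℕ → ℝ) (hxpos : ∀ t, 0 ≤ x t)
    (htraj : ∀ t, g (x (t + 1)) = f (x t)) :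
    (∀ t, ρ (g (x (t + 1))) = ρ (f (x t))) ∧
      ∃ xstar : ℝ, Tendsto x atTop (𝓝 xstar) :=
  stmt_4_general f g ρ θ hf hg hρ hθ hbound hnull hgmono hlim x hxpos htraj
end

section
/- For the price dynamics λ(t+1) = c'((v')⁻¹(λ(t))) with cost c(x) = x^β and value v(x) = x^{1/α}, α, β > 1, the market's maximal relative risk-aversion equals η* = α(β−1)/(α−1); hence the dynamics are globally asymptotically stable if β < 2 − 1/α. -/
open Filter Topology Real

/-!
For power functions the relative risk-aversion is the constant `(β - 1)/(1/α - 1)`, since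
the powers of `x` in `c'' v'` and `v'' c'` agree. Taking logarithms turns the price dynamics
into the affine recursion `μ(t+1) = log β + e log α + e μ(t)` with `e = α(β - 1)/(1 - α)`,
which converges geometrically when `|e| = η* < 1`, i.e. when `β < 2 - 1/α`.
-/

lemma deriv_deriv_rpow_const (b : ℝ) {x : ℝ} (hx : 0 < x) :
    deriv (deriv (fun y : ℝ => y ^ b)) x = b * (b - 1) * x ^ (b - 2) := by
  have hderiv : deriv (fun y : ℝ => y ^ b) =ᶠ[𝓝 x] fun y => b * y ^ (b - 1) := by
    filter_upwards [isOpen_Ioi.mem_nhds hx] with y _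
    exact Real.deriv_rpow_const _ _
  rw [hderiv.deriv_eq, deriv_const_mul _ (differentiableAt_rpow_const_of_ne _ hx.ne'),
    Real.deriv_rpow_const _ _]
  ring_nf

lemma relRiskAversion_rpow {a b x : ℝ} (ha : a ≠ 0) (ha₁ : a ≠ 1) (hb : b ≠ 0) (hx : 0 < x) :
    (deriv (deriv (fun y : ℝ => y ^ b)) x / deriv (deriv (fun y : ℝ => y ^ a)) x) *
        (deriv (fun y : ℝ => y ^ a) x / deriv (fun y : ℝ => y ^ b) x) = (b - 1) / (a - 1) := by
  rw [deriv_deriv_rpow_const b hx, deriv_deriv_rpow_const a hx, Real.deriv_rpow_const,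
    Real.deriv_rpow_const]
  have hpow : x ^ (b - 2) * x ^ (a - 1) = x ^ (a - 2) * x ^ (b - 1) := by
    rw [← rpow_add hx, ← rpow_add hx]; ring_nf
  have ha₁' : a - 1 ≠ 0 := sub_ne_zero.mpr ha₁
  rw [div_mul_div_comm, div_eq_div_iff (by positivity) ha₁']
  linear_combination (a * b * (b - 1) * (a - 1)) * hpow

lemma tendsto_of_affine_recurrence {C e : ℝ} (he : |e| < 1) {μ : ℕ → ℝ}
    (hμ : ∀ t, μ (t + 1) = C + e * μ t) : Tendsto μ atTop (𝓝 (C / (1 - e))) := by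
  have h1e : 1 - e ≠ 0 := by linarith [le_abs_self e]
  set μstar := C / (1 - e)
  have hfix : μstar = C + e * μstar := by simp only [μstar]; field_simp; ring
  clear_value μstar
  have hgeo : ∀ t, μ t = μstar + e ^ t * (μ 0 - μstar) := by
    intro t
    induction t with
    | zero => simp
    | succ n ih => rw [hμ n, ih, pow_succ]; linear_combination -hfix
  have hlim : Tendsto (fun t : ℕ => μstar + e ^ t * (μ 0 - μstar)) atTop
      (𝓝 (μstar + 0 * (μ 0 - μstar))) :=
    ((tendsto_pow_atTop_nhds_zero_of_abs_lt_one he).mul_const _).const_add _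
  rw [zero_mul, add_zero] at hlim
  exact hlim.congr fun t => (hgeo t).symm

lemma tendsto_of_rpow_recurrence {k a e : ℝ} (hk : 0 < k) (ha : 0 < a) (he : |e| < 1)
    {lam : ℕ → ℝ} (hlam : 0 < lam 0) (hrec : ∀ t, lam (t + 1) = k * (a * lam t) ^ e) :
    Tendsto lam atTop (𝓝 (exp ((log k + e * log a) / (1 - e)))) := by
  have hpos : ∀ t, 0 < lam t := by
    intro t
    induction t with
    | zero => exact hlam
    | succ n ih => rw [hrec n]; exact mul_pos hk (rpow_pos_of_pos (mul_pos ha ih) _)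
  have hlog : ∀ t, log (lam (t + 1)) = (log k + e * log a) + e * log (lam t) := by
    intro t
    have hal : 0 < a * lam t := mul_pos ha (hpos t)
    rw [hrec t, log_mul hk.ne' (rpow_pos_of_pos hal _).ne', log_rpow hal,
      log_mul ha.ne' (hpos t).ne']
    ring
  have hexp := (continuous_exp.tendsto _).comp
    (tendsto_of_affine_recurrence (μ := fun t => log (lam t)) he hlog)
  exact hexp.congr fun t => exp_log (hpos t)

/-- for `c(x) = x^β`, `v(x) = x^{1/α}` with `α, β > 1`, the market's
maximal relative risk-aversion equals `η* = α(β−1)/(α−1)` (the relative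
risk-aversion is constant in `x`), and hence the price dynamics
`λ(t+1) = c'((v')⁻¹(λ(t)))`, i.e. `λ(t+1) = β(αλ(t))^{(αβ−α)/(1−α)}`, are
globally asymptotically stable whenever `β < 2 − 1/α`. -/
theorem stmt_5 (α β : ℝ) (hα : 1 < α) (hβ : 1 < β) :
    (∀ x > (0:ℝ),
      |(deriv (deriv (fun y : ℝ => y ^ β)) x / deriv (deriv (fun y : ℝ => y ^ (1/α))) x) *
        (deriv (fun y : ℝ => y ^ (1/α)) x / deriv (fun y : ℝ => y ^ β) x)|
        = α * (β - 1) / (α - 1)) ∧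
    (β < 2 - 1/α →
      ∃ lamstar : ℝ, 0 < lamstar ∧
        ∀ lam : ℕ → ℝ, 0 < lam 0 →
          (∀ t, lam (t + 1) = β * (α * lam t) ^ ((α * β - α) / (1 - α))) →
          Tendsto lam atTop (𝓝 lamstar)) := by
  have hα₀ : 0 < α := by linarith
  have hα₁ : α - 1 ≠ 0 := by linarith
  constructor
  · intro x hx
    have h1α : 1 - α ≠ 0 := by linarith
    have hinv : 1 / α ≠ 1 := by rw [ne_eq, div_eq_one_iff_eq hα₀.ne']; linarith
    rw [relRiskAversion_rpow (by positivity) hinv (by linarith) hx,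
      show (β - 1) / (1 / α - 1) = -(α * (β - 1) / (α - 1)) by field_simp; ring,
      abs_neg, abs_of_pos (by apply div_pos <;> nlinarith)]
  · intro hlt
    have hexp : |(α * β - α) / (1 - α)| < 1 := by
      have hneg : (α * β - α) / (1 - α) < 0 := div_neg_of_pos_of_neg (by nlinarith) (by linarith)
      have hαβ : α * β < 2 * α - 1 := by
        have := mul_lt_mul_of_pos_left hlt hα₀
        field_simp at this
        linarith
      rw [abs_of_neg hneg, neg_lt, lt_div_iff_of_neg (by linarith)]
      linarith
    exact ⟨_, exp_pos _, fun lam hlam hrec =>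
      tendsto_of_rpow_recurrence (by linarith) hα₀ hexp hlam hrec⟩
end

section
/- For c(x) = x^β and v(x) = x^{1/α} with α, β > 1, the explicit price recursion is λ(t+1) = β (α λ(t))^{(αβ−α)/(1−α)}; consequently log λ(t) satisfies a linear recursion with slope (αβ−α)/(1−α), and the recursion converges for all positive initial prices if and only if |α(β−1)/(α−1)| < 1. -/
open Filter Topology Real

/-!
Taking logarithms turns `λ (t+1) = β (α λ t)^e` into the affine recursion
`y (t+1) = (log β + e log α) + e y t` for `y = log λ`, whose solutions are `y* + eᵗ (y 0 - y*)`
around the fixed point `y*`. They converge when `|e| < 1`. When `|e| ≥ 1` and `e ≠ 1` (here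
`e = α(β-1)/(1-α) < 0`), the prices `exp (y* + eᵗ)` are at least `exp (y* + 1)` at every even time,
so a limit would be positive; its logarithm would then make `eᵗ` converge, which is impossible.
-/

theorem not_tendsto_pow_of_one_le_abs {e : ℝ} (he : 1 ≤ |e|) (he1 : e ≠ 1) (L : ℝ) :
    ¬ Tendsto (fun n : ℕ => e ^ n) atTop (𝓝 L) := by
  intro h
  have hfix : L = e * L := by
    refine tendsto_nhds_unique ((tendsto_add_atTop_iff_nat 1).2 h) ?_
    simpa only [pow_succ'] using h.const_mul e
  have hL : L = 0 := by
    have : (1 - e) * L = 0 := by linear_combination hfix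
    exact (mul_eq_zero.1 this).resolve_left (sub_ne_zero.2 he1.symm)
  subst hL
  exact not_lt.2 he (tendsto_pow_atTop_nhds_zero_iff.1 h)

section AffineRecursion

variable {a e : ℝ} {y : ℕ → ℝ}

theorem affine_fixedPoint (he : e ≠ 1) : a + e * (a / (1 - e)) = a / (1 - e) := by
  have : 1 - e ≠ 0 := sub_ne_zero.2 he.symm
  field_simp
  ring

theorem affine_rec_eq (he : e ≠ 1) (hy : ∀ t, y (t + 1) = a + e * y t) (t : ℕ) :
    y t = a / (1 - e) + e ^ t * (y 0 - a / (1 - e)) := by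
  induction t with
  | zero => simp
  | succ t ih =>
    rw [hy t, ih]
    linear_combination affine_fixedPoint (a := a) he

theorem tendsto_of_affine_rec (he : |e| < 1) (hy : ∀ t, y (t + 1) = a + e * y t) :
    Tendsto y atTop (𝓝 (a / (1 - e))) := by
  have he1 : e ≠ 1 := fun h => by simp [h] at he
  have hgeom := (tendsto_pow_atTop_nhds_zero_of_abs_lt_one he).mul_const (y 0 - a / (1 - e))
  simpa only [zero_mul, add_zero, ← affine_rec_eq he1 hy] using hgeom.const_add (a / (1 - e))

end AffineRecursion

section PriceRecursion

variable {α β e : ℝ} {lam : ℕ → ℝ}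

theorem log_price_rec (hα : 0 < α) (hβ : 0 < β) (hpos : ∀ t, 0 < lam t)
    (hrec : ∀ t, lam (t + 1) = β * (α * lam t) ^ e) (t : ℕ) :
    log (lam (t + 1)) = log β + e * log (α * lam t) := by
  have hbase : 0 < α * lam t := mul_pos hα (hpos t)
  rw [hrec t, log_mul hβ.ne' (rpow_pos_of_pos hbase e).ne', log_rpow hbase]

theorem log_price_rec_affine (hα : 0 < α) (hβ : 0 < β) (hpos : ∀ t, 0 < lam t)
    (hrec : ∀ t, lam (t + 1) = β * (α * lam t) ^ e) (t : ℕ) :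
    log (lam (t + 1)) = (log β + e * log α) + e * log (lam t) := by
  rw [log_price_rec hα hβ hpos hrec, log_mul hα.ne' (hpos t).ne']
  ring

theorem price_rec_pos (hα : 0 < α) (hβ : 0 < β) (h0 : 0 < lam 0)
    (hrec : ∀ t, lam (t + 1) = β * (α * lam t) ^ e) (t : ℕ) : 0 < lam t := by
  induction t with
  | zero => exact h0
  | succ t ih =>
    rw [hrec t]
    have : 0 < α * lam t := mul_pos hα ih
    positivity

theorem tendsto_of_price_rec (hα : 0 < α) (hβ : 0 < β) (he : |e| < 1) (h0 : 0 < lam 0)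
    (hrec : ∀ t, lam (t + 1) = β * (α * lam t) ^ e) :
    Tendsto lam atTop (𝓝 (exp ((log β + e * log α) / (1 - e)))) := by
  have hpos := price_rec_pos hα hβ h0 hrec
  have hlog := tendsto_of_affine_rec (y := fun t => log (lam t)) he
    (log_price_rec_affine hα hβ hpos hrec)
  refine ((continuous_exp.tendsto _).comp hlog).congr fun t => ?_
  simp [exp_log (hpos t)]

theorem exists_price_rec_not_tendsto (hα : 0 < α) (hβ : 0 < β) (he : 1 ≤ |e|) (he1 : e ≠ 1) :
    ∃ lam : ℕ → ℝ, 0 < lam 0 ∧ (∀ t, lam (t + 1) = β * (α * lam t) ^ e) ∧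
      ∀ L, ¬ Tendsto lam atTop (𝓝 L) := by
  set ystar := (log β + e * log α) / (1 - e)
  have hfix : log β + e * log α + e * ystar = ystar := affine_fixedPoint he1
  refine ⟨fun t => exp (ystar + e ^ t), exp_pos _, fun t => ?_, fun L hL => ?_⟩
  · show exp (ystar + e ^ (t + 1)) = β * (α * exp (ystar + e ^ t)) ^ e
    rw [← exp_log hβ, ← exp_log hα, ← exp_add, ← exp_mul, ← exp_add]
    congr 1
    linear_combination (-1 : ℝ) * hfix
  · have heven : ∃ᶠ t in atTop, exp (ystar + 1) ≤ exp (ystar + e ^ t) := by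
      refine frequently_atTop.2 fun n => ⟨2 * n, by omega, exp_le_exp.2 ?_⟩
      have : 1 ≤ (e ^ 2) ^ n := one_le_pow₀ (by nlinarith [sq_abs e])
      rw [pow_mul]
      linarith
    have hLpos : 0 < L := (exp_pos _).trans_le (ge_of_tendsto_of_frequently hL heven)
    have hgeom : Tendsto (fun t : ℕ => e ^ t) atTop (𝓝 (log L - ystar)) := by
      simpa only [log_exp, add_sub_cancel_left] using (hL.log hLpos.ne').sub_const ystar
    exact not_tendsto_pow_of_one_le_abs he he1 _ hgeom

end PriceRecursion

/-- for `c(x) = x^β`, `v(x) = x^{1/α}` (`α, β > 1`), the explicit price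
recursion is `λ(t+1) = β(αλ(t))^{(αβ−α)/(1−α)}`; consequently `log λ(t)` satisfies a
linear recursion with slope `(αβ−α)/(1−α)`, and the recursion converges for all
positive initial prices iff `|α(β−1)/(α−1)| < 1`. -/
theorem stmt_6 (α β : ℝ) (hα : 1 < α) (hβ : 1 < β) :
    (∀ lam : ℝ, 0 < lam →
      deriv (fun x : ℝ => x ^ β) ((α * lam) ^ (α / (1 - α)))
        = β * (α * lam) ^ ((α * β - α) / (1 - α))) ∧
    (∀ lam : ℕ → ℝ, (∀ t, 0 < lam t) →
      (∀ t, lam (t + 1) = β * (α * lam t) ^ ((α * β - α) / (1 - α))) →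
      ∀ t, Real.log (lam (t + 1))
        = Real.log β + ((α * β - α) / (1 - α)) * Real.log (α * lam t)) ∧
    ((∀ lam : ℕ → ℝ, 0 < lam 0 →
        (∀ t, lam (t + 1) = β * (α * lam t) ^ ((α * β - α) / (1 - α))) →
        ∃ L : ℝ, Tendsto lam atTop (𝓝 L))
      ↔ |α * (β - 1) / (α - 1)| < 1) := by
  have hα0 : 0 < α := by linarith
  have hβ0 : 0 < β := by linarith
  have hslope : |α * (β - 1) / (α - 1)| = |(α * β - α) / (1 - α)| := by
    rw [← abs_neg, ← div_neg, neg_sub, mul_sub, mul_one]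
  have he1 : (α * β - α) / (1 - α) ≠ 1 :=
    ((div_neg_of_pos_of_neg (by nlinarith) (by linarith)).trans zero_lt_one).ne
  refine ⟨fun lam hlam => ?_, fun lam hpos hrec => log_price_rec hα0 hβ0 hpos hrec, ?_⟩
  · rw [Real.deriv_rpow_const, ← rpow_mul (by positivity)]
    ring_nf
  rw [hslope]
  constructor
  · intro hconv
    by_contra! hslope_ge
    obtain ⟨lam, h0, hrec, hdiv⟩ := exists_price_rec_not_tendsto hα0 hβ0 hslope_ge he1
    obtain ⟨L, hL⟩ := hconv lam h0 hrec
    exact hdiv L hL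
  · exact fun hlt lam h0 hrec => ⟨_, tendsto_of_price_rec hα0 hβ0 hlt h0 hrec⟩
end

section
/- Let x : ℤ₊ → ℝ satisfy g(x(t+1)) = f(x(t), x(t−1), …, x(t−n)) with f ∈ C¹(ℝ^{n+1}), g ∈ C¹ monotone, and |∂f/∂y_k(y)| ≤ θ_k |g'(y_k)| for all y ∈ ℝ^{n+1}, with Σ_{k} θ_k ≤ 1. Then there is γ₀ ≥ 0 depending only on the initial states such that the set Ω₀ = {x ∈ ℝ : ∃z ∈ ℝⁿ, |g(x) − f(x,z)| ≤ γ₀} is invariant: if x(T−n), …, x(T) ∈ Ω₀ then x(t) ∈ Ω₀ for all t > T. -/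
/-!
Write `d t = |g (x (t+1)) - g (x t)|`. Since `g` is monotone, `|g'|` is the derivative of `±g`,
so integrating the bound `|∂f/∂y_k| ≤ θ_k |g'(y_k)|` one coordinate at a time gives
`|f b - f a| ≤ ∑ θ_k |g (b_k) - g (a_k)|`. Applied to two consecutive lag vectors of the
trajectory this yields `d (t+n+1) ≤ ∑ θ_k d (t+n-k)`, and as `∑ θ_k ≤ 1` no increment ever
exceeds `γ₀ = d 0 + ⋯ + d n`. Finally `g (x (t+1)) = f (x t, …, x (t-n))`, so for `t ≥ n` the
point `x t` lies in `Ω₀` with witness `z = (x (t-1), …, x (t-n))` and defect `d t`.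
-/

open Finset

theorem Monotone.abs_sub_le_mul_abs_sub_of_abs_deriv_le {φ g : ℝ → ℝ} {θ : ℝ}
    (hgmono : Monotone g) (hφ : Differentiable ℝ φ) (hg : Differentiable ℝ g)
    (hderiv : ∀ s, |deriv φ s| ≤ θ * |deriv g s|) (a b : ℝ) :
    |φ b - φ a| ≤ θ * |g b - g a| := by
  wlog hab : a ≤ b generalizing a b
  · rw [abs_sub_comm, abs_sub_comm (g b)]
    exact this b a (le_of_not_ge hab)
  have hB : ∀ s, HasDerivAt (fun s => θ * (g s - g a)) (θ * deriv g s) s := fun s =>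
    ((hg s).hasDerivAt.sub_const (g a)).const_mul θ
  have key := image_norm_le_of_norm_deriv_right_le_deriv_boundary
    (f := fun s => φ s - φ a) (hφ.continuous.continuousOn.sub continuousOn_const)
    (fun s _ => ((hφ s).hasDerivAt.sub_const (φ a)).hasDerivWithinAt)
    (by simp) hB (fun s _ => by simpa [abs_of_nonneg hgmono.deriv_nonneg] using hderiv s)
    (Set.right_mem_Icc.mpr hab)
  simpa [abs_of_nonneg (sub_nonneg.mpr (hgmono hab))] using key

theorem abs_sub_le_mul_abs_sub_of_abs_deriv_le {φ g : ℝ → ℝ} {θ : ℝ}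
    (hφ : Differentiable ℝ φ) (hg : Differentiable ℝ g) (hgmono : Monotone g ∨ Antitone g)
    (hderiv : ∀ s, |deriv φ s| ≤ θ * |deriv g s|) (a b : ℝ) :
    |φ b - φ a| ≤ θ * |g b - g a| := by
  rcases hgmono with hmono | hanti
  · exact hmono.abs_sub_le_mul_abs_sub_of_abs_deriv_le hφ hg hderiv a b
  · have := hanti.neg.abs_sub_le_mul_abs_sub_of_abs_deriv_le hφ hg.neg
      (fun s => by simpa only [Pi.neg_def, deriv.fun_neg, abs_neg] using hderiv s) a b
    simpa only [Pi.neg_apply, neg_sub_neg, abs_sub_comm (g a)] using this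

theorem abs_sub_le_sum_of_abs_update_sub_le {ι α : Type*} [Fintype ι] [DecidableEq ι]
    {F : (ι → α) → ℝ} {w : ι → α → α → ℝ}
    (hupdate : ∀ c k u v, |F (Function.update c k v) - F (Function.update c k u)| ≤ w k u v)
    (a b : ι → α) : |F b - F a| ≤ ∑ k, w k (a k) (b k) := by
  suffices ∀ s : Finset ι, |F (s.piecewise b a) - F a| ≤ ∑ k ∈ s, w k (a k) (b k) by
    simpa using this univ
  intro s
  induction s using Finset.induction_on with
  | empty => simp
  | @insert j s hj ih =>
    have hold : s.piecewise b a = Function.update (s.piecewise b a) j (a j) := by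
      rw [← Finset.piecewise_eq_of_notMem s b a hj, Function.update_eq_self]
    calc |F ((insert j s).piecewise b a) - F a|
        ≤ |F ((insert j s).piecewise b a) - F (s.piecewise b a)|
          + |F (s.piecewise b a) - F a| := abs_sub_le _ _ _
      _ ≤ w j (a j) (b j) + ∑ k ∈ s, w k (a k) (b k) := by
        refine add_le_add ?_ ih
        rw [Finset.piecewise_insert, hold, Function.update_idem]
        exact hupdate _ j _ _
      _ = ∑ k ∈ insert j s, w k (a k) (b k) := by rw [sum_insert hj]

section

variable {ι : Type*} [Fintype ι] [DecidableEq ι] {f : (ι → ℝ) → ℝ} {g : ℝ → ℝ} {θ : ι → ℝ}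

theorem abs_update_sub_le (hf : Differentiable ℝ f) (hg : Differentiable ℝ g)
    (hgmono : Monotone g ∨ Antitone g)
    (hbound : ∀ y k, |fderiv ℝ f y (Pi.single k 1)| ≤ θ k * |deriv g (y k)|)
    (c : ι → ℝ) (k : ι) (u v : ℝ) :
    |f (Function.update c k v) - f (Function.update c k u)| ≤ θ k * |g v - g u| := by
  have hderiv : ∀ s, HasDerivAt (fun s => f (Function.update c k s))
      (fderiv ℝ f (Function.update c k s) (Pi.single k 1)) s := fun s =>
    (hf _).hasFDerivAt.comp_hasDerivAt s (hasDerivAt_update c k s)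
  refine abs_sub_le_mul_abs_sub_of_abs_deriv_le (fun s => (hderiv s).differentiableAt) hg hgmono
    (fun s => ?_) u v
  simpa [(hderiv s).deriv] using hbound (Function.update c k s) k

theorem abs_sub_le_sum_mul_abs_sub (hf : Differentiable ℝ f) (hg : Differentiable ℝ g)
    (hgmono : Monotone g ∨ Antitone g)
    (hbound : ∀ y k, |fderiv ℝ f y (Pi.single k 1)| ≤ θ k * |deriv g (y k)|) (a b : ι → ℝ) :
    |f b - f a| ≤ ∑ k, θ k * |g (b k) - g (a k)| :=
  abs_sub_le_sum_of_abs_update_sub_le (abs_update_sub_le hf hg hgmono hbound) a b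

end

theorem le_of_le_sum_mul_lags {n : ℕ} {d : ℕ → ℝ} {θ : Fin (n + 1) → ℝ} {M : ℝ}
    (hθ : ∀ k, 0 ≤ θ k) (hθsum : ∑ k, θ k ≤ 1) (hM : 0 ≤ M) (hinit : ∀ t ≤ n, d t ≤ M)
    (hrec : ∀ t, d (t + n + 1) ≤ ∑ k : Fin (n + 1), θ k * d (t + n - k)) (t : ℕ) : d t ≤ M := by
  induction t using Nat.strong_induction_on with
  | _ t ih =>
    rcases le_or_gt t n with ht | ht
    · exact hinit t ht
    obtain ⟨t, rfl⟩ : ∃ s, t = s + n + 1 := ⟨t - n - 1, by omega⟩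
    calc d (t + n + 1) ≤ ∑ k : Fin (n + 1), θ k * d (t + n - k) := hrec t
      _ ≤ ∑ k : Fin (n + 1), θ k * M :=
        sum_le_sum fun k _ => mul_le_mul_of_nonneg_left (ih _ (by omega)) (hθ k)
      _ = (∑ k, θ k) * M := (sum_mul ..).symm
      _ ≤ M := mul_le_of_le_one_left hM hθsum

section

variable {n : ℕ} {g : ℝ → ℝ} {f : (Fin (n + 1) → ℝ) → ℝ} {x : ℕ → ℝ}

theorem abs_increment_le_sum_mul_lags {θ : Fin (n + 1) → ℝ} (hf : Differentiable ℝ f)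
    (hg : Differentiable ℝ g) (hgmono : Monotone g ∨ Antitone g)
    (hbound : ∀ y k, |fderiv ℝ f y (Pi.single k 1)| ≤ θ k * |deriv g (y k)|)
    (htraj : ∀ t, g (x (t + n + 1)) = f (fun k : Fin (n + 1) => x (t + n - k.val))) (t : ℕ) :
    |g (x (t + n + 1 + 1)) - g (x (t + n + 1))|
      ≤ ∑ k : Fin (n + 1), θ k * |g (x (t + n - k + 1)) - g (x (t + n - k))| := by
  have hnext : t + n + 1 + 1 = t + 1 + n + 1 := by omega
  rw [hnext, htraj, htraj]
  convert abs_sub_le_sum_mul_abs_sub hf hg hgmono hbound _ _ using 5 with k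
  have := k.isLt
  congr 2
  omega

theorem abs_sub_cons_lags_eq
    (htraj : ∀ t, g (x (t + n + 1)) = f (fun k : Fin (n + 1) => x (t + n - k.val))) (t : ℕ) :
    |g (x (t + n)) - f (Fin.cons (x (t + n)) fun j : Fin n => x (t + n - 1 - j))|
      = |g (x (t + n + 1)) - g (x (t + n))| := by
  have hlags : (Fin.cons (x (t + n)) fun j : Fin n => x (t + n - 1 - j) : Fin (n + 1) → ℝ)
      = fun k : Fin (n + 1) => x (t + n - k) := by
    funext k
    refine Fin.cases rfl (fun j => ?_) k
    simp only [Fin.cons_succ, Fin.val_succ]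
    congr 1
    omega
  rw [hlags, ← htraj, abs_sub_comm]

end

/-- invariance for the higher-order implicit system
`g(x(t+1)) = f(x(t), …, x(t−n))` with `|∂f/∂y_k| ≤ θ_k|g'(y_k)|` and `Σθ_k ≤ 1`:
there exists `γ₀ ≥ 0` (depending only on the initial states) such that
`Ω₀ = {x | ∃ z, |g x − f (x, z)| ≤ γ₀}` is invariant. -/
theorem stmt_7 (n : ℕ) (g : ℝ → ℝ) (f : (Fin (n + 1) → ℝ) → ℝ)
    (θ : Fin (n + 1) → ℝ)
    (hg : ContDiff ℝ 1 g) (hgmono : Monotone g ∨ Antitone g)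
    (hf : ContDiff ℝ 1 f)
    (hθ : ∀ k, 0 ≤ θ k) (hθsum : ∑ k, θ k ≤ 1)
    (hbound : ∀ (y : Fin (n + 1) → ℝ) (k : Fin (n + 1)),
      |fderiv ℝ f y (Pi.single k 1)| ≤ θ k * |deriv g (y k)|)
    (x : ℕ → ℝ)
    (htraj : ∀ t, g (x (t + n + 1)) = f (fun k : Fin (n + 1) => x (t + n - k.val))) :
    ∃ γ₀ : ℝ, 0 ≤ γ₀ ∧
      (∀ T, n ≤ T →
        (∀ j ≤ n, x (T - j) ∈ {y : ℝ | ∃ z : Fin n → ℝ, |g y - f (Fin.cons y z)| ≤ γ₀}) →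
        ∀ t, T < t → x t ∈ {y : ℝ | ∃ z : Fin n → ℝ, |g y - f (Fin.cons y z)| ≤ γ₀}) := by
  set d : ℕ → ℝ := fun t => |g (x (t + 1)) - g (x t)|
  have hγ₀ : 0 ≤ ∑ s ∈ range (n + 1), d s := sum_nonneg fun s _ => abs_nonneg _
  have hd : ∀ t, d t ≤ ∑ s ∈ range (n + 1), d s :=
    le_of_le_sum_mul_lags hθ hθsum hγ₀
      (fun t ht => single_le_sum (fun s _ => abs_nonneg _) (mem_range.mpr (by omega)))
      (abs_increment_le_sum_mul_lags (hf.differentiable one_ne_zero)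
        (hg.differentiable one_ne_zero) hgmono hbound htraj)
  refine ⟨_, hγ₀, fun T hT _ t ht => ?_⟩
  obtain ⟨t, rfl⟩ : ∃ s, t = s + n := ⟨t - n, by omega⟩
  exact ⟨_, (abs_sub_cons_lags_eq htraj t).trans_le (hd _)⟩
end

section
/- For n = 1 and the system g(x(t+1)) = f(x(t), x(t−1)) with |∂₁f| ≤ θ₁|g'| and |∂₂f| ≤ θ₂|g'| pointwise, the function V(x, z) = |g(x) − f(x, z)| satisfies V(x(t+1), x(t)) − V(x(t), x(t−1)) ≤ θ₂|Δg_{t−1}| + (θ₁ − 1)|Δg_t| along trajectories, where Δg_t = g(x(t+1)) − g(x(t)). -/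
/-!
Along a trajectory `V(x(t+1), x(t)) = |g(x(t+1)) - f(x(t), x(t-1))| = |Δg_t|`, while
`V(x(t+2), x(t+1)) = |f(x(t+1), x(t)) - f(x(t+2), x(t+1))|`. Because `g` is monotone, the
derivative bounds `|∂ᵢf| ≤ θᵢ|g'|` integrate to `|f(x,z) - f(x',z)| ≤ θ₁|g x - g x'|` and the
analogue in `z` (the functions `θ g ± f(·, z)` are monotone), so the triangle inequality bounds
the second quantity by `θ₁|Δg_t| + θ₂|Δg_{t-1}|`.
-/

theorem abs_sub_le_sub_of_abs_deriv_le_deriv {h G : ℝ → ℝ} (hh : Differentiable ℝ h)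
    (hG : Differentiable ℝ G) (hb : ∀ x, |deriv h x| ≤ deriv G x) {a c : ℝ} (hac : a ≤ c) :
    |h c - h a| ≤ G c - G a := by
  have hplus : Monotone (G + h) := monotone_of_deriv_nonneg (hG.add hh) fun x => by
    rw [deriv_add (hG x) (hh x)]
    linarith [neg_abs_le (deriv h x), hb x]
  have hminus : Monotone (G - h) := monotone_of_deriv_nonneg (hG.sub hh) fun x => by
    rw [deriv_sub (hG x) (hh x)]
    linarith [le_abs_self (deriv h x), hb x]
  have h₁ := hplus hac
  have h₂ := hminus hac
  simp only [Pi.add_apply, Pi.sub_apply] at h₁ h₂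
  rw [abs_sub_le_iff]
  constructor <;> linarith

theorem abs_sub_le_mul_abs_sub_of_abs_deriv_le_s9 {g h : ℝ → ℝ} {θ : ℝ} (hg : Differentiable ℝ g)
    (hgm : Monotone g ∨ Antitone g) (hh : Differentiable ℝ h)
    (hb : ∀ x, |deriv h x| ≤ θ * |deriv g x|) (a c : ℝ) :
    |h a - h c| ≤ θ * |g a - g c| := by
  wlog hca : c ≤ a generalizing a c
  · rw [abs_sub_comm (h a), abs_sub_comm (g a)]
    exact this c a (le_of_not_ge hca)
  rcases hgm with hmono | hanti
  · have hG : ∀ x, deriv (fun y => θ * g y) x = θ * |deriv g x| := fun x => by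
      rw [deriv_const_mul θ (hg x), abs_of_nonneg hmono.deriv_nonneg]
    have hbound := abs_sub_le_sub_of_abs_deriv_le_deriv hh (hg.const_mul θ)
      (fun x => (hG x).symm ▸ hb x) hca
    rw [abs_of_nonneg (sub_nonneg.2 (hmono hca))]
    linarith [hbound]
  · have hG : ∀ x, deriv (fun y => -(θ * g y)) x = θ * |deriv g x| := fun x => by
      rw [deriv.fun_neg, deriv_const_mul θ (hg x), abs_of_nonpos hanti.deriv_nonpos]
      ring
    have hbound := abs_sub_le_sub_of_abs_deriv_le_deriv (G := fun y => -(θ * g y)) hh (hg.const_mul θ).neg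
      (fun x => (hG x).symm ▸ hb x) hca
    rw [abs_of_nonpos (sub_nonpos.2 (hanti hca))]
    linarith [hbound]

theorem abs_sub_le_of_abs_partialDeriv_le {g : ℝ → ℝ} {f : ℝ → ℝ → ℝ} {θ₁ θ₂ : ℝ}
    (hg : Differentiable ℝ g) (hgm : Monotone g ∨ Antitone g)
    (hf : Differentiable ℝ (fun p : ℝ × ℝ => f p.1 p.2))
    (hb₁ : ∀ x z : ℝ, |deriv (fun x' => f x' z) x| ≤ θ₁ * |deriv g x|)
    (hb₂ : ∀ x z : ℝ, |deriv (fun z' => f x z') z| ≤ θ₂ * |deriv g z|) (x z x' z' : ℝ) :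
    |f x z - f x' z'| ≤ θ₁ * |g x - g x'| + θ₂ * |g z - g z'| := by
  have hfx : Differentiable ℝ (fun x'' => f x'' z) :=
    hf.comp (differentiable_id.prodMk (differentiable_const z))
  have hfz : Differentiable ℝ (fun z'' => f x' z'') :=
    hf.comp ((differentiable_const x').prodMk differentiable_id)
  calc |f x z - f x' z'| ≤ |f x z - f x' z| + |f x' z - f x' z'| := abs_sub_le _ _ _
    _ ≤ θ₁ * |g x - g x'| + θ₂ * |g z - g z'| := add_le_add
        (abs_sub_le_mul_abs_sub_of_abs_deriv_le_s9 hg hgm hfx (fun y => hb₁ y z) x x')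
        (abs_sub_le_mul_abs_sub_of_abs_deriv_le_s9 hg hgm hfz (fun y => hb₂ x' y) z z')

theorem stmt_9_general (g : ℝ → ℝ) (f : ℝ → ℝ → ℝ) (θ₁ θ₂ : ℝ)
    (hg : ContDiff ℝ 1 g) (hgmono : Monotone g ∨ Antitone g)
    (hf : ContDiff ℝ 1 (fun p : ℝ × ℝ => f p.1 p.2))
    (hb1 : ∀ x z : ℝ, |deriv (fun x' => f x' z) x| ≤ θ₁ * |deriv g x|)
    (hb2 : ∀ x z : ℝ, |deriv (fun z' => f x z') z| ≤ θ₂ * |deriv g z|)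
    (x : ℕ → ℝ)
    (htraj : ∀ t, g (x (t + 2)) = f (x (t + 1)) (x t)) :
    ∀ t, |g (x (t + 2)) - f (x (t + 2)) (x (t + 1))|
        - |g (x (t + 1)) - f (x (t + 1)) (x t)|
      ≤ θ₂ * |g (x (t + 1)) - g (x t)|
        + (θ₁ - 1) * |g (x (t + 2)) - g (x (t + 1))| := by
  intro t
  have hV₀ : |g (x (t + 1)) - f (x (t + 1)) (x t)| = |g (x (t + 2)) - g (x (t + 1))| := by
    rw [← htraj t, abs_sub_comm]
  have hV₁ := abs_sub_le_of_abs_partialDeriv_le (hg.differentiable one_ne_zero) hgmono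
    (hf.differentiable one_ne_zero) hb1 hb2 (x (t + 1)) (x t) (x (t + 2)) (x (t + 1))
  rw [← htraj t, abs_sub_comm (g (x (t + 1))), abs_sub_comm (g (x t))] at hV₁
  rw [hV₀]
  linarith

/-- for the second-order system `g(x(t+1)) = f(x(t), x(t−1))` with
`|∂₁f| ≤ θ₁|g'|`, `|∂₂f| ≤ θ₂|g'|`, the function `V(x,z) = |g x − f (x,z)|`
satisfies the dissipation inequality
`V(x(t+1), x(t)) − V(x(t), x(t−1)) ≤ θ₂|Δg_{t−1}| + (θ₁ − 1)|Δg_t|`. -/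
theorem stmt_9 (g : ℝ → ℝ) (f : ℝ → ℝ → ℝ) (θ₁ θ₂ : ℝ)
    (hg : ContDiff ℝ 1 g) (hgmono : Monotone g ∨ Antitone g)
    (hf : ContDiff ℝ 1 (fun p : ℝ × ℝ => f p.1 p.2))
    (hθ₁ : 0 ≤ θ₁) (hθ₂ : 0 ≤ θ₂)
    (hb1 : ∀ x z : ℝ, |deriv (fun x' => f x' z) x| ≤ θ₁ * |deriv g x|)
    (hb2 : ∀ x z : ℝ, |deriv (fun z' => f x z') z| ≤ θ₂ * |deriv g z|)
    (x : ℕ → ℝ)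
    (htraj : ∀ t, g (x (t + 2)) = f (x (t + 1)) (x t)) :
    ∀ t, |g (x (t + 2)) - f (x (t + 2)) (x (t + 1))|
        - |g (x (t + 1)) - f (x (t + 1)) (x t)|
      ≤ θ₂ * |g (x (t + 1)) - g (x t)|
        + (θ₁ - 1) * |g (x (t + 2)) - g (x (t + 1))| :=
  stmt_9_general g f θ₁ θ₂ hg hgmono hf hb1 hb2 x htraj
end

section
/- Consider the multiplicatively perturbed market dynamics (c')⁻¹(λ(t+1)) = (1 + δ(t)/2)·(v')⁻¹(λ(t)) with |δ(t)| ≤ κ ≤ 1. Setting g(λ) = log((c')⁻¹(λ)) and f(λ, δ) = log(1 + δ/2) + log((v')⁻¹(λ)), the disturbance bound |∂f/∂δ| ≤ 1 holds, and |∂f/∂λ| ≤ θ*|g'(λ)| holds where θ* = sup_λ |ε_D(λ)/ε_S(λ)| is the maximal relative price-elasticity; hence if θ* < 1 the log-scaled IMV of supply is at most 2κ/(1 − θ*). -/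
open Filter Finset Real

open Topology

/-! In the coordinates `x = log s(λ)`, `y = log d(λ)` the dynamics reads
`x (t + 1) = log (1 + δ t / 2) + y t`. Since `s` inverts `c'` and `c''` is finite, `s' ≠ 0`, so the
elasticity bound `|(log d)'| ≤ θ* |(log s)'|` turns, by Cauchy's mean value theorem, into
`|Δy| ≤ θ* |Δx|`. With `|log (1 + δ/2)| ≤ |δ|` the supply increments `a t = |Δx t|` satisfy
`a (t + 1) ≤ 2κ + θ* a t`, hence `a t ≤ 2κ/(1 - θ*) + θ*^t a 0`, and Cesàro averaging gives the
bound on the limsup. -/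

lemma abs_deriv_log_one_add_half_le {x : ℝ} (hx : |x| ≤ 1) :
    |deriv (fun y : ℝ => log (1 + y / 2)) x| ≤ 1 := by
  have hpos : 1 / 2 ≤ 1 + x / 2 := by linarith [(abs_le.mp hx).1]
  have hderiv : HasDerivAt (fun y : ℝ => log (1 + y / 2)) (1 / 2 / (1 + x / 2)) x := by
    simpa using
      (((hasDerivAt_id x).div_const 2).const_add 1).log (by simp only [id]; linarith)
  rw [hderiv.deriv, abs_of_pos (by positivity), div_le_one (by linarith)]
  linarith

lemma abs_log_one_add_half_le {x : ℝ} (hx : |x| ≤ 1) : |log (1 + x / 2)| ≤ |x| := by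
  have hpos : 0 < 1 + x / 2 := by linarith [(abs_le.mp hx).1]
  have hinv : (1 + x / 2)⁻¹ ≤ 1 + |x| := by
    rw [inv_le_iff_one_le_mul₀ hpos]
    cases abs_cases x <;> nlinarith
  rw [abs_le]
  constructor
  · linarith [one_sub_inv_le_log_of_pos hpos]
  · linarith [log_le_sub_one_of_pos hpos, le_abs_self x, abs_nonneg x]

lemma deriv_mul_deriv_eq_one_of_leftInverse {f g : ℝ → ℝ} {x : ℝ}
    (hf : DifferentiableAt ℝ f (g x)) (hg : DifferentiableAt ℝ g x)
    (hfg : ∀ᶠ y in 𝓝 x, f (g y) = y) : deriv f (g x) * deriv g x = 1 :=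
  (hf.hasDerivAt.comp x hg.hasDerivAt).unique ((hasDerivAt_id x).congr_of_eventuallyEq hfg)

lemma deriv_ne_zero_of_leftInverse_deriv {c s : ℝ → ℝ} {U : Set ℝ} {l : ℝ}
    (hc : ContDiffOn ℝ 2 c U) (hU : IsOpen U) (hsl : s l ∈ U) (hs : DifferentiableAt ℝ s l)
    (hcs : ∀ᶠ y in 𝓝 l, deriv c (s y) = y) : deriv s l ≠ 0 := by
  have hc' : DifferentiableAt ℝ (deriv c) (s l) :=
    ((hc.deriv_of_isOpen (m := 1) hU (by norm_num)).differentiableOn one_ne_zero).differentiableAt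
      (hU.mem_nhds hsl)
  exact right_ne_zero_of_mul_eq_one (deriv_mul_deriv_eq_one_of_leftInverse hc' hs hcs)

noncomputable def elasticity (f : ℝ → ℝ) (l : ℝ) : ℝ := l / f l * deriv f l

lemma abs_deriv_log_le_of_abs_elasticity_div_le {d s : ℝ → ℝ} {θ l : ℝ} (hl : l ≠ 0)
    (hd : DifferentiableAt ℝ d l) (hs : DifferentiableAt ℝ s l)
    (hd0 : d l ≠ 0) (hs0 : s l ≠ 0) (hs' : deriv s l ≠ 0)
    (hθ : |elasticity d l / elasticity s l| ≤ θ) :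
    |deriv (fun x => log (d x)) l| ≤ θ * |deriv (fun x => log (s x)) l| := by
  have hratio :
      elasticity d l / elasticity s l = (deriv d l / d l) / (deriv s l / s l) := by
    simp only [elasticity]; field_simp
  rw [(hd.hasDerivAt.log hd0).deriv, (hs.hasDerivAt.log hs0).deriv]
  rwa [hratio, abs_div, div_le_iff₀ (abs_pos.mpr (div_ne_zero hs' hs0))] at hθ

lemma abs_sub_le_mul_abs_sub_of_abs_deriv_le_s13 {F G : ℝ → ℝ} {θ : ℝ} {S : Set ℝ}
    (hS : S.OrdConnected) (hF : ∀ x ∈ S, DifferentiableAt ℝ F x)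
    (hG : ∀ x ∈ S, DifferentiableAt ℝ G x) (hG' : ∀ x ∈ S, deriv G x ≠ 0)
    (hFG : ∀ x ∈ S, |deriv F x| ≤ θ * |deriv G x|) {a b : ℝ} (ha : a ∈ S) (hb : b ∈ S) :
    |F b - F a| ≤ θ * |G b - G a| := by
  wlog hab : a < b generalizing a b
  · rcases (not_lt.mp hab).eq_or_lt with rfl | hba
    · simp
    · rw [abs_sub_comm, abs_sub_comm (G b)]
      exact this hb ha hba
  have hIcc : Set.Icc a b ⊆ S := hS.out ha hb
  have hIoo : Set.Ioo a b ⊆ S := Set.Ioo_subset_Icc_self.trans hIcc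
  obtain ⟨ξ, hξ, hcauchy⟩ := exists_ratio_hasDerivAt_eq_ratio_slope F (deriv F) hab
    (fun x hx => (hF x (hIcc hx)).continuousAt.continuousWithinAt)
    (fun x hx => (hF x (hIoo hx)).hasDerivAt) G (deriv G)
    (fun x hx => (hG x (hIcc hx)).continuousAt.continuousWithinAt)
    (fun x hx => (hG x (hIoo hx)).hasDerivAt)
  have hGξ : 0 < |deriv G ξ| := abs_pos.mpr (hG' ξ (hIoo hξ))
  have key : |F b - F a| * |deriv G ξ| ≤ θ * |G b - G a| * |deriv G ξ| := by
    calc |F b - F a| * |deriv G ξ| = |G b - G a| * |deriv F ξ| := by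
          rw [← abs_mul, ← abs_mul, hcauchy]
      _ ≤ |G b - G a| * (θ * |deriv G ξ|) := by gcongr; exact hFG ξ (hIoo hξ)
      _ = θ * |G b - G a| * |deriv G ξ| := by ring
  exact le_of_mul_le_mul_right key hGξ

lemma abs_sub_succ_le_of_succ_eq_add {x y e : ℕ → ℝ} {κ θ : ℝ}
    (hxy : ∀ t, x (t + 1) = e t + y t)
    (he : ∀ t, |e t| ≤ κ) (hy : ∀ t, |y (t + 1) - y t| ≤ θ * |x (t + 1) - x t|) (t : ℕ) :
    |x (t + 1 + 1) - x (t + 1)| ≤ 2 * κ + θ * |x (t + 1) - x t| := by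
  calc |x (t + 1 + 1) - x (t + 1)| = |(e (t + 1) - e t) + (y (t + 1) - y t)| := by
        rw [hxy, hxy]; ring_nf
    _ ≤ |e (t + 1)| + |e t| + |y (t + 1) - y t| :=
        (abs_add_le _ _).trans (by gcongr; exact abs_sub _ _)
    _ ≤ 2 * κ + θ * |x (t + 1) - x t| := by linarith [he t, he (t + 1), hy t]

lemma le_div_one_sub_add_pow_mul {a : ℕ → ℝ} {b θ : ℝ}
    (hb : 0 ≤ b) (hθ0 : 0 ≤ θ) (hθ1 : θ < 1)
    (hrec : ∀ t, a (t + 1) ≤ b + θ * a t) (t : ℕ) : a t ≤ b / (1 - θ) + θ ^ t * a 0 := by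
  have hfix : b + θ * (b / (1 - θ)) = b / (1 - θ) := by
    field_simp [(sub_pos.mpr hθ1).ne']; ring
  induction t with
  | zero => simpa using div_nonneg hb (sub_pos.mpr hθ1).le
  | succ n ih =>
    calc a (n + 1) ≤ b + θ * (b / (1 - θ) + θ ^ n * a 0) := (hrec n).trans (by gcongr)
      _ = b / (1 - θ) + θ ^ (n + 1) * a 0 := by linear_combination hfix

lemma limsup_mean_Icc_le_of_le_of_tendsto {a u : ℕ → ℝ} {L : ℝ} (ha : ∀ t, 0 ≤ a t)
    (hau : ∀ t, a t ≤ u t) (hu : Tendsto u atTop (𝓝 L)) :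
    limsup (fun T : ℕ => 1 / (T : ℝ) * ∑ t ∈ Icc 1 T, a t) atTop ≤ L := by
  have hmean : Tendsto (fun T : ℕ => 1 / (T : ℝ) * ∑ t ∈ Icc 1 T, u t) atTop (𝓝 L) := by
    have hshift (T : ℕ) : ∑ t ∈ Icc 1 T, u t = ∑ i ∈ range T, u (i + 1) := by
      rw [range_eq_Ico, sum_Ico_add' u 0 T 1]; rfl
    simpa only [hshift, one_div] using ((tendsto_add_atTop_iff_nat 1).mpr hu).cesaro
  refine (limsup_le_limsup (Eventually.of_forall fun T => ?_)
    (isCoboundedUnder_le_of_le atTop fun T =>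
      mul_nonneg (by positivity) (sum_nonneg fun t _ => ha t))
    hmean.isBoundedUnder_le).trans_eq hmean.limsup_eq
  exact mul_le_mul_of_nonneg_left (sum_le_sum fun t _ => hau t) (by positivity)

lemma limsup_mean_Icc_le_of_le_add_mul {a : ℕ → ℝ} {b θ : ℝ} (ha : ∀ t, 0 ≤ a t)
    (hb : 0 ≤ b) (hθ0 : 0 ≤ θ) (hθ1 : θ < 1) (hrec : ∀ t, a (t + 1) ≤ b + θ * a t) :
    limsup (fun T : ℕ => 1 / (T : ℝ) * ∑ t ∈ Icc 1 T, a t) atTop ≤ b / (1 - θ) := by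
  refine limsup_mean_Icc_le_of_le_of_tendsto ha
    (le_div_one_sub_add_pow_mul hb hθ0 hθ1 hrec) ?_
  simpa using tendsto_const_nhds.add
    ((tendsto_pow_atTop_nhds_zero_of_lt_one hθ0 hθ1).mul_const (a 0))

theorem stmt_13_general (c d s : ℝ → ℝ) (κ θstar : ℝ)
    (hc : ContDiffOn ℝ 2 c (Set.Ioi (0:ℝ)))
    (hdpos : ∀ l > (0:ℝ), 0 < d l) (hspos : ∀ l > (0:ℝ), 0 < s l)
    (hsinv : ∀ l > (0:ℝ), deriv c (s l) = l)
    (hddiff : ∀ l > (0:ℝ), DifferentiableAt ℝ d l) (hsdiff : ∀ l > (0:ℝ), DifferentiableAt ℝ s l)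
    (hκ1 : κ ≤ 1)
    (hθelast : ∀ l > (0:ℝ),
      |((l / d l) * deriv d l) / ((l / s l) * deriv s l)| ≤ θstar) :
    (∀ δ : ℝ, |δ| ≤ κ → |deriv (fun δ' : ℝ => Real.log (1 + δ' / 2)) δ| ≤ 1) ∧
    (∀ l > (0:ℝ),
      |deriv (fun l' => Real.log (d l')) l| ≤ θstar * |deriv (fun l' => Real.log (s l')) l|) ∧
    (θstar < 1 →
      ∀ lam δ : ℕ → ℝ, (∀ t, 0 < lam t) → (∀ t, |δ t| ≤ κ) →
        (∀ t, s (lam (t + 1)) = (1 + δ t / 2) * d (lam t)) →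
        Filter.limsup
            (fun T : ℕ =>
              (1 / (T : ℝ)) * ∑ t ∈ Finset.Icc 1 T,
                |Real.log (s (lam (t + 1))) - Real.log (s (lam t))|)
            atTop
          ≤ 2 * κ / (1 - θstar)) := by
  have hs' (l : ℝ) (hl : 0 < l) : deriv s l ≠ 0 :=
    deriv_ne_zero_of_leftInverse_deriv hc isOpen_Ioi (hspos l hl) (hsdiff l hl)
      ((eventually_gt_nhds hl).mono hsinv)
  have hstate (l : ℝ) (hl : 0 < l) :
      |deriv (fun l' => log (d l')) l| ≤ θstar * |deriv (fun l' => log (s l')) l| :=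
    abs_deriv_log_le_of_abs_elasticity_div_le hl.ne' (hddiff l hl) (hsdiff l hl)
      (hdpos l hl).ne' (hspos l hl).ne' (hs' l hl) (hθelast l hl)
  refine ⟨fun δ hδ => abs_deriv_log_one_add_half_le (hδ.trans hκ1), hstate, ?_⟩
  intro hθ1 lam δ hlam hδ hdyn
  have hθ0 : 0 ≤ θstar := (abs_nonneg _).trans (hθelast 1 one_pos)
  have hκ0 : 0 ≤ κ := (abs_nonneg _).trans (hδ 0)
  have hlogdyn (t : ℕ) : log (s (lam (t + 1))) = log (1 + δ t / 2) + log (d (lam t)) := by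
    have hpos : 0 < 1 + δ t / 2 := by linarith [(abs_le.mp ((hδ t).trans hκ1)).1]
    rw [hdyn, log_mul hpos.ne' (hdpos _ (hlam t)).ne']
  have hlogs (l : ℝ) (hl : 0 < l) :
      HasDerivAt (fun l' => log (s l')) (deriv s l / s l) l :=
    (hsdiff l hl).hasDerivAt.log (hspos l hl).ne'
  have hcontract (t : ℕ) : |log (d (lam (t + 1))) - log (d (lam t))|
      ≤ θstar * |log (s (lam (t + 1))) - log (s (lam t))| :=
    abs_sub_le_mul_abs_sub_of_abs_deriv_le_s13 Set.ordConnected_Ioi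
      (fun l hl => ((hddiff l hl).hasDerivAt.log (hdpos l hl).ne').differentiableAt)
      (fun l hl => (hlogs l hl).differentiableAt)
      (fun l hl => (hlogs l hl).deriv ▸ div_ne_zero (hs' l hl) (hspos l hl).ne')
      hstate (hlam t) (hlam (t + 1))
  exact limsup_mean_Icc_le_of_le_add_mul (fun t => abs_nonneg _) (by positivity) hθ0 hθ1
    (abs_sub_succ_le_of_succ_eq_add (x := fun t => log (s (lam t))) (y := fun t => log (d (lam t)))
      hlogdyn (fun t => (abs_log_one_add_half_le ((hδ t).trans hκ1)).trans (hδ t)) hcontract)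

/-- for the multiplicatively perturbed market dynamics
`s(λ(t+1)) = (1 + δ(t)/2)·d(λ(t))` with `|δ(t)| ≤ κ ≤ 1`, where `d = (v')⁻¹`,
`s = (c')⁻¹`, `g(λ) = log(s λ)` and `f(λ,δ) = log(1+δ/2) + log(d λ)`:
the disturbance bound `|∂f/∂δ| ≤ 1` holds, the state bound
`|∂f/∂λ| ≤ θ*|g'(λ)|` holds with `θ*` the maximal relative price-elasticity,
and if `θ* < 1` the log-scaled IMV of supply is at most `2κ/(1−θ*)`. -/
theorem stmt_13 (c v d s : ℝ → ℝ) (κ θstar : ℝ)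
    (hc : ContDiffOn ℝ 2 c (Set.Ioi (0:ℝ))) (hv : ContDiffOn ℝ 2 v (Set.Ioi (0:ℝ)))
    (hcconv : StrictConvexOn ℝ (Set.Ioi 0) c) (hvconc : StrictConcaveOn ℝ (Set.Ioi 0) v)
    (hcmono : StrictMonoOn c (Set.Ioi 0)) (hvmono : StrictMonoOn v (Set.Ioi 0))
    (hdpos : ∀ l > (0:ℝ), 0 < d l) (hspos : ∀ l > (0:ℝ), 0 < s l)
    (hdinv : ∀ l > (0:ℝ), deriv v (d l) = l) (hsinv : ∀ l > (0:ℝ), deriv c (s l) = l)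
    (hddiff : ∀ l > (0:ℝ), DifferentiableAt ℝ d l) (hsdiff : ∀ l > (0:ℝ), DifferentiableAt ℝ s l)
    (hκ0 : 0 < κ) (hκ1 : κ ≤ 1) (hθ0 : 0 ≤ θstar)
    (hθelast : ∀ l > (0:ℝ),
      |((l / d l) * deriv d l) / ((l / s l) * deriv s l)| ≤ θstar) :
    (∀ δ : ℝ, |δ| ≤ κ → |deriv (fun δ' : ℝ => Real.log (1 + δ' / 2)) δ| ≤ 1) ∧
    (∀ l > (0:ℝ),
      |deriv (fun l' => Real.log (d l')) l| ≤ θstar * |deriv (fun l' => Real.log (s l')) l|) ∧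
    (θstar < 1 →
      ∀ lam δ : ℕ → ℝ, (∀ t, 0 < lam t) → (∀ t, |δ t| ≤ κ) →
        (∀ t, s (lam (t + 1)) = (1 + δ t / 2) * d (lam t)) →
        Filter.limsup
            (fun T : ℕ =>
              (1 / (T : ℝ)) * ∑ t ∈ Finset.Icc 1 T,
                |Real.log (s (lam (t + 1))) - Real.log (s (lam t))|)
            atTop
          ≤ 2 * κ / (1 - θstar)) :=
  stmt_13_general c d s κ θstar hc hdpos hspos hsinv hddiff hsdiff hκ1 hθelast
end

section
/- For the price dynamics λ(t+1) = c'((v')⁻¹(λ(t))) with representative agents, if there exists l ≥ 0 such that the maximal relative generalized price-elasticity θ*(l) = sup_λ |((λ/d(λ))^l d'(λ)) / ((λ/s(λ))^l s'(λ))| < 1, where d = (v')⁻¹ and s = (c')⁻¹, then the price dynamics are stable (trajectories converge to the market-clearing equilibrium price). -/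
/-!
Write `ρ = powLog l`, so that `ρ' z = z ^ (-l)` and the generalized elasticity of `f` at `λ` is
`λ ^ l * (ρ ∘ f)' λ`. The elasticity bound then reads `|(ρ ∘ d)'| ≤ θ (ρ ∘ s)'`, which integrates
to `|ρ (d x) - ρ (d y)| ≤ θ |ρ (s x) - ρ (s y)|`. As `c'` is injective, the dynamics say
`s (λ (t + 1)) = d (λ t)`, so in the coordinate `μ = ρ (s λ)` each step contracts by `θ` towards
`ρ (s λ*)`, where `λ*` clears the market. Such a `λ*` exists by the intermediate value theorem,
since `d` decreases, `s` increases and `d (λ 0) = s (λ 1)`. Finally `ρ ∘ s` is strictly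
increasing, so convergence of `μ` forces convergence of `λ`.
-/

open Filter Topology Real Set

theorem MonotoneOn.strictMonoOn_of_leftInvOn {α β : Type*} [Preorder α] [LinearOrder β]
    {f : β → α} {g : α → β} {s : Set α} {t : Set β} (hf : MonotoneOn f t) (hg : MapsTo g s t)
    (hfg : LeftInvOn f g s) : StrictMonoOn g s := by
  intro x hx y hy hxy
  by_contra! h
  have := hf (hg hy) (hg hx) h
  rw [hfg hx, hfg hy] at this
  exact hxy.not_ge this

theorem AntitoneOn.strictAntiOn_of_leftInvOn {α β : Type*} [Preorder α] [LinearOrder β]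
    {f : β → α} {g : α → β} {s : Set α} {t : Set β} (hf : AntitoneOn f t) (hg : MapsTo g s t)
    (hfg : LeftInvOn f g s) : StrictAntiOn g s := by
  intro x hx y hy hxy
  by_contra! h
  have := hf (hg hx) (hg hy) h
  rw [hfg hx, hfg hy] at this
  exact hxy.not_ge this

theorem deriv_pos_of_leftInvOn {f g : ℝ → ℝ} {D : Set ℝ} {x : ℝ} (hD : D ∈ 𝓝 x)
    (hg : MonotoneOn g D) (hfg : LeftInvOn f g D) (hf : DifferentiableAt ℝ f (g x))
    (hgx : DifferentiableAt ℝ g x) : 0 < deriv g x := by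
  have hchain : deriv f (g x) * deriv g x = 1 := by
    have hid : f ∘ g =ᶠ[𝓝 x] id := eventually_of_mem hD fun y hy => hfg hy
    exact (hf.hasDerivAt.comp x hgx.hasDerivAt).unique ((hasDerivAt_id x).congr_of_eventuallyEq hid)
  have hacc : AccPt x (𝓟 D) :=
    accPt_iff_frequently_nhdsNE.2 (eventually_nhdsWithin_of_eventually_nhds hD).frequently
  have hnonneg : 0 ≤ deriv g x := hgx.hasDerivAt.hasDerivWithinAt.nonneg_of_monotoneOn hacc hg
  refine hnonneg.lt_of_ne fun h => ?_
  simp [← h] at hchain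

theorem abs_sub_le_sub_of_abs_deriv_le {D : Set ℝ} (hD : Convex ℝ D) {F G F' G' : ℝ → ℝ}
    (hF : ∀ x ∈ D, HasDerivAt F (F' x) x) (hG : ∀ x ∈ D, HasDerivAt G (G' x) x)
    (hFG : ∀ x ∈ D, |F' x| ≤ G' x) {x y : ℝ} (hx : x ∈ D) (hy : y ∈ D) (hyx : y ≤ x) :
    |F x - F y| ≤ G x - G y := by
  have hsub : MonotoneOn (fun z => G z - F z) D :=
    monotoneOn_of_hasDerivWithinAt_nonneg hD
      (fun z hz => ((hG z hz).sub (hF z hz)).continuousAt.continuousWithinAt)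
      (fun z hz => ((hG z (interior_subset hz)).sub (hF z (interior_subset hz))).hasDerivWithinAt)
      (fun z hz => by linarith [le_abs_self (F' z), hFG z (interior_subset hz)])
  have hadd : MonotoneOn (fun z => G z + F z) D :=
    monotoneOn_of_hasDerivWithinAt_nonneg hD
      (fun z hz => ((hG z hz).add (hF z hz)).continuousAt.continuousWithinAt)
      (fun z hz => ((hG z (interior_subset hz)).add (hF z (interior_subset hz))).hasDerivWithinAt)
      (fun z hz => by linarith [neg_abs_le (F' z), hFG z (interior_subset hz)])
  have h₁ := hsub hy hx hyx
  have h₂ := hadd hy hx hyx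
  simp only at h₁ h₂
  exact abs_le.2 ⟨by linarith, by linarith⟩

theorem tendsto_of_dist_succ_le_mul {α : Type*} [PseudoMetricSpace α] {u : ℕ → α} {a : α}
    {θ : ℝ} (hθ₀ : 0 ≤ θ) (hθ₁ : θ < 1) (hu : ∀ n, dist (u (n + 1)) a ≤ θ * dist (u n) a) :
    Tendsto u atTop (𝓝 a) := by
  have hgeom : ∀ n, dist (u n) a ≤ θ ^ n * dist (u 0) a := by
    intro n
    induction n with
    | zero => simp
    | succ n ih =>
      calc dist (u (n + 1)) a ≤ θ * dist (u n) a := hu n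
        _ ≤ θ * (θ ^ n * dist (u 0) a) := by gcongr
        _ = θ ^ (n + 1) * dist (u 0) a := by ring
  rw [tendsto_iff_dist_tendsto_zero]
  refine squeeze_zero (fun _ => dist_nonneg) hgeom ?_
  simpa using (tendsto_pow_atTop_nhds_zero_of_lt_one hθ₀ hθ₁).mul_const (dist (u 0) a)

theorem StrictMonoOn.tendsto_of_tendsto_comp_s14 {α β ι : Type*} [LinearOrder α] [TopologicalSpace α]
    [OrderTopology α] [DenselyOrdered α] [NoMinOrder α] [NoMaxOrder α]
    [LinearOrder β] [TopologicalSpace β] [OrderTopology β]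
    {G : α → β} {D : Set α} {a : α} {u : ι → α} {l : Filter ι}
    (hG : StrictMonoOn G D) (hD : D ∈ 𝓝 a) (hu : ∀ᶠ i in l, u i ∈ D)
    (hGu : Tendsto (G ∘ u) l (𝓝 (G a))) : Tendsto u l (𝓝 a) := by
  obtain ⟨p, q, ⟨hpa, haq⟩, hpq⟩ := mem_nhds_iff_exists_Ioo_subset.1 hD
  refine tendsto_order.2 ⟨fun b hb => ?_, fun b hb => ?_⟩
  · obtain ⟨c, hc, hca⟩ := exists_between (max_lt hb hpa)
    have hcD : c ∈ D := hpq ⟨(le_max_right _ _).trans_lt hc, hca.trans haq⟩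
    filter_upwards [hu, (tendsto_order.1 hGu).1 _ (hG hcD (mem_of_mem_nhds hD) hca)]
      with i hi hGi
    exact (le_max_left _ _).trans_lt (hc.trans ((hG.lt_iff_lt hcD hi).1 hGi))
  · obtain ⟨c, hac, hc⟩ := exists_between (lt_min hb haq)
    have hcD : c ∈ D := hpq ⟨hpa.trans hac, hc.trans_le (min_le_right _ _)⟩
    filter_upwards [hu, (tendsto_order.1 hGu).2 _ (hG (mem_of_mem_nhds hD) hcD hac)]
      with i hi hGi
    exact ((hG.lt_iff_lt hi hcD).1 hGi).trans (hc.trans_le (min_le_left _ _))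

theorem IsPreconnected.exists_eq_of_antitoneOn_of_monotoneOn {α β : Type*} [LinearOrder α]
    [TopologicalSpace α] [LinearOrder β] [TopologicalSpace β] [OrderClosedTopology β]
    {f g : α → β} {D : Set α} (hD : IsPreconnected D) (hf : ContinuousOn f D)
    (hg : ContinuousOn g D) (hf' : AntitoneOn f D) (hg' : MonotoneOn g D) {x y : α}
    (hx : x ∈ D) (hy : y ∈ D) (hxy : g y = f x) : ∃ z ∈ D, f z = g z := by
  have hmin : min x y ∈ D := by rcases min_choice x y with h | h <;> rw [h] <;> assumption
  have hmax : max x y ∈ D := by rcases max_choice x y with h | h <;> rw [h] <;> assumption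
  refine hD.intermediate_value₂ hmax hmin hf hg ?_ ?_
  · calc f (max x y) ≤ f x := hf' hx hmax (le_max_left _ _)
      _ = g y := hxy.symm
      _ ≤ g (max x y) := hg' hy hmax (le_max_right _ _)
  · calc g (min x y) ≤ g y := hg' hmin hy (min_le_right _ _)
      _ = f x := hxy
      _ ≤ f (min x y) := hf' hmin hx (min_le_left _ _)

/-- The paper's scaling `ρ`, rescaled by `1 / (1 - l)` when `l ≠ 1`. -/
noncomputable def powLog (l z : ℝ) : ℝ := if l = 1 then log z else z ^ (1 - l) / (1 - l)

theorem hasDerivAt_powLog (l : ℝ) {z : ℝ} (hz : 0 < z) : HasDerivAt (powLog l) (z ^ (-l)) z := by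
  unfold powLog
  rcases eq_or_ne l 1 with rfl | hl
  · simpa [rpow_neg_one] using hasDerivAt_log hz.ne'
  · have hl' : 1 - l ≠ 0 := sub_ne_zero.2 hl.symm
    simp only [hl, if_false]
    refine ((hasDerivAt_rpow_const (p := 1 - l) (Or.inl hz.ne')).div_const (1 - l)).congr_deriv ?_
    rw [mul_div_cancel_left₀ _ hl']
    ring_nf

theorem strictMonoOn_powLog (l : ℝ) : StrictMonoOn (powLog l) (Ioi 0) :=
  strictMonoOn_of_deriv_pos (convex_Ioi 0)
    (fun z hz => (hasDerivAt_powLog l hz).continuousAt.continuousWithinAt) fun z hz => by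
      rw [interior_Ioi] at hz
      rw [(hasDerivAt_powLog l hz).deriv]
      exact rpow_pos_of_pos hz _

theorem abs_rpow_neg_mul_le_of_abs_elasticity_ratio_le {x a b A B l θ : ℝ} (hx : 0 < x)
    (ha : 0 < a) (hb : 0 < b) (hB : 0 < B)
    (h : |((x / a) ^ l * A) / ((x / b) ^ l * B)| ≤ θ) : |a ^ (-l) * A| ≤ θ * (b ^ (-l) * B) := by
  have hscale : ∀ y, 0 < y → ∀ C, (x / y) ^ l * C = x ^ l * (y ^ (-l) * C) := fun y hy C => by
    rw [div_rpow hx.le hy.le, rpow_neg hy.le]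
    ring
  have hbB : 0 < b ^ (-l) * B := mul_pos (rpow_pos_of_pos hb _) hB
  rw [hscale a ha, hscale b hb, mul_div_mul_left _ _ (rpow_pos_of_pos hx l).ne', abs_div,
    abs_of_pos hbB, div_le_iff₀ hbB] at h
  exact h

theorem abs_sub_le_mul_abs_sub_of_abs_deriv_le_s14 {D : Set ℝ} (hD : Convex ℝ D) {F G F' G' : ℝ → ℝ}
    {θ : ℝ} (hF : ∀ x ∈ D, HasDerivAt F (F' x) x) (hG : ∀ x ∈ D, HasDerivAt G (G' x) x)
    (hGmono : MonotoneOn G D) (hFG : ∀ x ∈ D, |F' x| ≤ θ * G' x) {x y : ℝ}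
    (hx : x ∈ D) (hy : y ∈ D) : |F x - F y| ≤ θ * |G x - G y| := by
  have hθG : ∀ x ∈ D, HasDerivAt (fun z => θ * G z) (θ * G' x) x := fun z hz =>
    (hG z hz).const_mul θ
  rcases le_total y x with hyx | hxy
  · have := abs_sub_le_sub_of_abs_deriv_le hD hF hθG hFG hx hy hyx
    rw [abs_of_nonneg (sub_nonneg.2 (hGmono hy hx hyx))]
    linarith
  · have := abs_sub_le_sub_of_abs_deriv_le hD hF hθG hFG hy hx hxy
    rw [abs_sub_comm, abs_sub_comm (G x), abs_of_nonneg (sub_nonneg.2 (hGmono hx hy hxy))]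
    linarith

theorem StrictMonoOn.tendsto_of_contraction {F G : ℝ → ℝ} {D : Set ℝ} {a θ : ℝ} {u : ℕ → ℝ}
    (hG : StrictMonoOn G D) (hD : D ∈ 𝓝 a) (hu : ∀ n, u n ∈ D)
    (hstep : ∀ n, G (u (n + 1)) = F (u n)) (ha : F a = G a)
    (hFG : ∀ x ∈ D, |F x - F a| ≤ θ * |G x - G a|) (hθ₀ : 0 ≤ θ) (hθ₁ : θ < 1) :
    Tendsto u atTop (𝓝 a) :=
  hG.tendsto_of_tendsto_comp_s14 hD (Eventually.of_forall hu) <|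
    tendsto_of_dist_succ_le_mul hθ₀ hθ₁ fun n => by
      simpa only [Function.comp, dist_eq, hstep, ha] using hFG _ (hu n)

theorem tendsto_of_abs_elasticity_ratio_le {d s : ℝ → ℝ} {l θ a : ℝ} {u : ℕ → ℝ}
    (hdpos : ∀ x > (0:ℝ), 0 < d x) (hspos : ∀ x > (0:ℝ), 0 < s x)
    (hddiff : ∀ x > (0:ℝ), DifferentiableAt ℝ d x) (hsdiff : ∀ x > (0:ℝ), DifferentiableAt ℝ s x)
    (hs : StrictMonoOn s (Ioi 0)) (hs' : ∀ x > (0:ℝ), 0 < deriv s x) (hθ : θ < 1)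
    (helast : ∀ x > (0:ℝ),
      |((x / d x) ^ l * deriv d x) / ((x / s x) ^ l * deriv s x)| ≤ θ)
    (ha : 0 < a) (hda : d a = s a) (hu : ∀ n, 0 < u n) (hstep : ∀ n, s (u (n + 1)) = d (u n)) :
    Tendsto u atTop (𝓝 a) := by
  have hθ₀ : 0 ≤ θ := (abs_nonneg _).trans (helast 1 one_pos)
  have hF : ∀ x ∈ Ioi (0 : ℝ), HasDerivAt (powLog l ∘ d) (d x ^ (-l) * deriv d x) x :=
    fun x hx => (hasDerivAt_powLog l (hdpos x hx)).comp x (hddiff x hx).hasDerivAt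
  have hG : ∀ x ∈ Ioi (0 : ℝ), HasDerivAt (powLog l ∘ s) (s x ^ (-l) * deriv s x) x :=
    fun x hx => (hasDerivAt_powLog l (hspos x hx)).comp x (hsdiff x hx).hasDerivAt
  have hGmono : StrictMonoOn (powLog l ∘ s) (Ioi 0) := (strictMonoOn_powLog l).comp hs hspos
  have hFG : ∀ x ∈ Ioi (0 : ℝ), |d x ^ (-l) * deriv d x| ≤ θ * (s x ^ (-l) * deriv s x) :=
    fun x hx => abs_rpow_neg_mul_le_of_abs_elasticity_ratio_le hx (hdpos x hx) (hspos x hx)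
      (hs' x hx) (helast x hx)
  exact hGmono.tendsto_of_contraction (Ioi_mem_nhds ha) hu
    (fun n => by simp only [Function.comp, hstep]) (by simp only [Function.comp, hda])
    (fun x hx => abs_sub_le_mul_abs_sub_of_abs_deriv_le_s14 (convex_Ioi 0) hF hG hGmono.monotoneOn
      hFG hx ha) hθ₀ hθ

theorem stmt_14_general (c v d s : ℝ → ℝ) (l θ : ℝ)
    (hc : ContDiffOn ℝ 2 c (Set.Ioi (0:ℝ))) (hv : ContDiffOn ℝ 2 v (Set.Ioi (0:ℝ)))
    (hcconv : StrictConvexOn ℝ (Set.Ioi 0) c) (hvconc : StrictConcaveOn ℝ (Set.Ioi 0) v)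
    (hdpos : ∀ x > (0:ℝ), 0 < d x) (hspos : ∀ x > (0:ℝ), 0 < s x)
    (hdinv : ∀ x > (0:ℝ), deriv v (d x) = x) (hsinv : ∀ x > (0:ℝ), deriv c (s x) = x)
    (hddiff : ∀ x > (0:ℝ), DifferentiableAt ℝ d x) (hsdiff : ∀ x > (0:ℝ), DifferentiableAt ℝ s x)
    (hθ : θ < 1)
    (helast : ∀ lam > (0:ℝ),
      |((lam / d lam) ^ l * deriv d lam) / ((lam / s lam) ^ l * deriv s lam)| ≤ θ) :
    ∀ lam : ℕ → ℝ, (∀ t, 0 < lam t) →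
      (∀ t, lam (t + 1) = deriv c (d (lam t))) →
      ∃ lamstar : ℝ, 0 < lamstar ∧ d lamstar = s lamstar ∧
        Tendsto lam atTop (𝓝 lamstar) := by
  intro lam hpos hdyn
  have hc' : StrictMonoOn (deriv c) (Ioi 0) := hcconv.strictMonoOn_deriv fun x hx =>
    (hc.contDiffAt (Ioi_mem_nhds hx)).differentiableAt (by norm_num)
  have hv' : StrictAntiOn (deriv v) (Ioi 0) := hvconc.strictAntiOn_deriv fun x hx =>
    (hv.contDiffAt (Ioi_mem_nhds hx)).differentiableAt (by norm_num)
  have hs : StrictMonoOn s (Ioi 0) := hc'.monotoneOn.strictMonoOn_of_leftInvOn hspos hsinv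
  have hd : StrictAntiOn d (Ioi 0) := hv'.antitoneOn.strictAntiOn_of_leftInvOn hdpos hdinv
  have hs' : ∀ x > 0, 0 < deriv s x := fun x hx =>
    deriv_pos_of_leftInvOn (Ioi_mem_nhds hx) hs.monotoneOn hsinv
      (((hc.deriv_of_isOpen isOpen_Ioi (by norm_num)).contDiffAt
        (Ioi_mem_nhds (hspos x hx))).differentiableAt one_ne_zero) (hsdiff x hx)
  have hstep : ∀ t, s (lam (t + 1)) = d (lam t) := fun t =>
    hc'.injOn (hspos _ (hpos _)) (hdpos _ (hpos _)) (by rw [hsinv _ (hpos _), hdyn])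
  obtain ⟨lamstar, hlamstar, heq⟩ := isPreconnected_Ioi.exists_eq_of_antitoneOn_of_monotoneOn
    (fun x hx => (hddiff x hx).continuousAt.continuousWithinAt)
    (fun x hx => (hsdiff x hx).continuousAt.continuousWithinAt)
    hd.antitoneOn hs.monotoneOn (hpos 0) (hpos 1) (hstep 0)
  exact ⟨lamstar, hlamstar, heq, tendsto_of_abs_elasticity_ratio_le hdpos hspos hddiff hsdiff
    hs hs' hθ helast hlamstar heq hpos hstep⟩

/-- for the price dynamics `λ(t+1) = c'(d(λ(t)))` with `d = (v')⁻¹`,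
`s = (c')⁻¹`, if for some `l ≥ 0` the maximal relative generalized
price-elasticity `θ*(l) = sup_λ |((λ/d λ)^l d'(λ)) / ((λ/s λ)^l s'(λ))| < 1`,
then the price dynamics are stable: every trajectory converges to the
market-clearing equilibrium price. -/
theorem stmt_14 (c v d s : ℝ → ℝ) (l θ : ℝ)
    (hc : ContDiffOn ℝ 2 c (Set.Ioi (0:ℝ))) (hv : ContDiffOn ℝ 2 v (Set.Ioi (0:ℝ)))
    (hcconv : StrictConvexOn ℝ (Set.Ioi 0) c) (hvconc : StrictConcaveOn ℝ (Set.Ioi 0) v)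
    (hcmono : StrictMonoOn c (Set.Ioi 0)) (hvmono : StrictMonoOn v (Set.Ioi 0))
    (hdpos : ∀ x > (0:ℝ), 0 < d x) (hspos : ∀ x > (0:ℝ), 0 < s x)
    (hdinv : ∀ x > (0:ℝ), deriv v (d x) = x) (hsinv : ∀ x > (0:ℝ), deriv c (s x) = x)
    (hddiff : ∀ x > (0:ℝ), DifferentiableAt ℝ d x) (hsdiff : ∀ x > (0:ℝ), DifferentiableAt ℝ s x)
    (hl : 0 ≤ l) (hθ : θ < 1)
    (helast : ∀ lam > (0:ℝ),
      |((lam / d lam) ^ l * deriv d lam) / ((lam / s lam) ^ l * deriv s lam)| ≤ θ) :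
    ∀ lam : ℕ → ℝ, (∀ t, 0 < lam t) →
      (∀ t, lam (t + 1) = deriv c (d (lam t))) →
      ∃ lamstar : ℝ, 0 < lamstar ∧ d lamstar = s lamstar ∧
        Tendsto lam atTop (𝓝 lamstar) :=
  stmt_14_general c v d s l θ hc hv hcconv hvconc hdpos hspos hdinv hsinv hddiff hsdiff hθ helast
end
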